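/- arXiv:2312.02421 — 8 statements merged into one kernel-verified Lean document; each statement's English description precedes it below -/
import Mathlib

section
/- Let d ≥ 2 be an integer, and let z₁, z₂, v₁, v₂ ∈ ℝ^d with v₁ ≠ 0 or v₂ ≠ 0. If there exists R > 0 such that ⟨v₁, x − z₁⟩/‖x − z₁‖^d = ⟨v₂, x − z₂⟩/‖x − z₂‖^d for every x ∈ ℝ^d with ‖x‖ > R, then z₁ = z₂ and v₁ = v₂. -/
open scoped RealInnerProductSpace
open Filter Topology

lemma dipole_inner_eq (d : ℕ) (hd : 2 ≤ d)
    (z₁ z₂ v₁ v₂ : EuclideanSpace ℝ (Fin d)) {R : ℝ} (hR : 0 < R)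
    (h : ∀ x : EuclideanSpace ℝ (Fin d), R < ‖x‖ →
      ⟪v₁, x - z₁⟫ / ‖x - z₁‖ ^ d = ⟪v₂, x - z₂⟫ / ‖x - z₂‖ ^ d)
    (u : EuclideanSpace ℝ (Fin d)) (hu : u ≠ 0) : ⟪v₁, u⟫ = ⟪v₂, u⟫ := by
  set w : EuclideanSpace ℝ (Fin d) := z₁ - z₂ with hw
  have hun : (0:ℝ) < ‖u‖ := norm_pos_iff.mpr hu
  have hund : (0:ℝ) < ‖u‖ ^ d := pow_pos hun d
  set g : ℝ → ℝ := fun t => (⟪v₂, w⟫ / t + ⟪v₂, u⟫) / ‖t⁻¹ • w + u‖ ^ d with hg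
  -- limit of g
  have hlim : Tendsto g atTop (𝓝 ((0 + ⟪v₂, u⟫) / ‖(0:ℝ) • w + u‖ ^ d)) := by
    apply Tendsto.div
    · exact (Tendsto.div_atTop tendsto_const_nhds tendsto_id).add tendsto_const_nhds
    · exact ((((tendsto_inv_atTop_zero).smul_const w).add_const u).norm).pow d
    · simp [hun.ne', pow_ne_zero, norm_ne_zero_iff, hu]
  have hlim' : Tendsto g atTop (𝓝 (⟪v₂, u⟫ / ‖u‖ ^ d)) := by simpa using hlim
  -- g is eventually constant
  have hev : ∀ᶠ t in atTop, g t = ⟪v₁, u⟫ / ‖u‖ ^ d := by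
    filter_upwards [eventually_gt_atTop ((R + ‖z₁‖ + ‖w‖ + 1) / ‖u‖),
      eventually_gt_atTop 0] with t ht ht0
    have htu : R + ‖z₁‖ + ‖w‖ + 1 < t * ‖u‖ := by
      rw [div_lt_iff₀ hun] at ht; linarith
    set x : EuclideanSpace ℝ (Fin d) := z₁ + t • u with hx
    have hxz₁ : x - z₁ = t • u := by simp [hx]
    have hxz₂ : x - z₂ = w + t • u := by rw [hx, hw]; abel
    have hxn : R < ‖x‖ := by
      have h1 : ‖t • u‖ ≤ ‖x‖ + ‖z₁‖ := by
        calc ‖t • u‖ = ‖x - z₁‖ := by rw [hxz₁]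
        _ ≤ ‖x‖ + ‖z₁‖ := norm_sub_le x z₁
      rw [norm_smul, Real.norm_of_nonneg ht0.le] at h1
      linarith [norm_nonneg w]
    have heq := h x hxn
    rw [hxz₁, hxz₂] at heq
    have hN : ‖w + t • u‖ = t * ‖t⁻¹ • w + u‖ := by
      have e : w + t • u = t • (t⁻¹ • w + u) := by
        rw [smul_add, smul_smul, mul_inv_cancel₀ ht0.ne', one_smul]
      rw [e, norm_smul, Real.norm_of_nonneg ht0.le]
    have hNpos : (0:ℝ) < ‖t⁻¹ • w + u‖ := by
      have h1 : ‖u‖ ≤ ‖t⁻¹ • w + u‖ + ‖t⁻¹ • w‖ := by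
        calc ‖u‖ = ‖(t⁻¹ • w + u) - t⁻¹ • w‖ := by congr 1; abel
        _ ≤ _ := norm_sub_le _ _
      have h2 : ‖t⁻¹ • w‖ < ‖u‖ := by
        rw [norm_smul, Real.norm_eq_abs, abs_of_pos (by positivity), ← div_eq_inv_mul,
          div_lt_iff₀ ht0]
        nlinarith [norm_nonneg z₁, hR]
      linarith
    set N : ℝ := ‖t⁻¹ • w + u‖ with hNdef
    rw [norm_smul, Real.norm_of_nonneg ht0.le, hN, real_inner_smul_right,
      inner_add_right, real_inner_smul_right] at heq
    set A : ℝ := ⟪v₁, u⟫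
    set B : ℝ := ⟪v₂, u⟫
    set C : ℝ := ⟪v₂, w⟫
    -- heq : t * A / (t*‖u‖)^d = (C + t*B) / (t*N)^d
    have htd : (0:ℝ) < t ^ d := by positivity
    have key : t * A * N ^ d = (C + t * B) * ‖u‖ ^ d := by
      rw [div_eq_div_iff (by positivity) (by positivity), mul_pow, mul_pow] at heq
      have : t ^ d * (t * A * N ^ d) = t ^ d * ((C + t * B) * ‖u‖ ^ d) := by
        linear_combination heq
      exact mul_left_cancel₀ htd.ne' this
    show (C / t + B) / N ^ d = A / ‖u‖ ^ d
    rw [div_eq_div_iff (by positivity) hund.ne']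
    have ht0' : (t:ℝ) ≠ 0 := ht0.ne'
    field_simp
    linear_combination -key
  have heq2 := tendsto_nhds_unique_of_eventuallyEq hlim' tendsto_const_nhds hev
  have h2 := congrArg (· * ‖u‖ ^ d) heq2
  simpa [div_mul_cancel₀, hund.ne'] using h2.symm

/-- Two exterior dipole fields that agree outside a large ball must have the same pole
and the same moment. -/
theorem dipole_uniqueness (d : ℕ) (hd : 2 ≤ d)
    (z₁ z₂ v₁ v₂ : EuclideanSpace ℝ (Fin d)) (hv : v₁ ≠ 0 ∨ v₂ ≠ 0)
    (h : ∃ R > (0 : ℝ), ∀ x : EuclideanSpace ℝ (Fin d), R < ‖x‖ →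
      ⟪v₁, x - z₁⟫ / ‖x - z₁‖ ^ d = ⟪v₂, x - z₂⟫ / ‖x - z₂‖ ^ d) :
    z₁ = z₂ ∧ v₁ = v₂ := by
  obtain ⟨R, hR, h⟩ := h
  -- Step 1 : v₁ = v₂
  have hvv : v₁ = v₂ := by
    apply ext_inner_right ℝ
    intro u
    by_cases hu : u = 0
    · simp [hu]
    · exact dipole_inner_eq d hd z₁ z₂ v₁ v₂ hR h u hu
  subst hvv
  have hv0 : v₁ ≠ 0 := by rcases hv with hv | hv <;> exact hv
  have hvn : (0:ℝ) < ‖v₁‖ := norm_pos_iff.mpr hv0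
  set w : EuclideanSpace ℝ (Fin d) := z₁ - z₂ with hw
  -- helper: evaluating at a suitable far point
  have point : ∀ u : EuclideanSpace ℝ (Fin d), u ≠ 0 →
      ∃ t : ℝ, 0 < t ∧ R < ‖z₁ + t • u‖ ∧ (0:ℝ) < ‖w + t • u‖ ∧
        ⟪v₁, t • u⟫ / ‖t • u‖ ^ d = ⟪v₁, w + t • u⟫ / ‖w + t • u‖ ^ d := by
    intro u hu
    have hun : (0:ℝ) < ‖u‖ := norm_pos_iff.mpr hu
    refine ⟨(R + ‖z₁‖ + ‖z₂‖ + 1) / ‖u‖, by positivity, ?_, ?_, ?_⟩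
    all_goals
      set t : ℝ := (R + ‖z₁‖ + ‖z₂‖ + 1) / ‖u‖ with htdef
      have ht0 : (0:ℝ) < t := by positivity
      have htu : t * ‖u‖ = R + ‖z₁‖ + ‖z₂‖ + 1 := by
        rw [htdef, div_mul_cancel₀ _ hun.ne']
      have hxn : R + ‖z₂‖ + 1 ≤ ‖z₁ + t • u‖ := by
        have h1 : ‖t • u‖ ≤ ‖z₁ + t • u‖ + ‖z₁‖ := by
          calc ‖t • u‖ = ‖(z₁ + t • u) - z₁‖ := by congr 1; abel
          _ ≤ _ := norm_sub_le _ _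
        rw [norm_smul, Real.norm_of_nonneg ht0.le, htu] at h1
        linarith
    · linarith [norm_nonneg z₂]
    · have h2 : ‖z₁ + t • u‖ ≤ ‖w + t • u‖ + ‖z₂‖ := by
        calc ‖z₁ + t • u‖ = ‖(w + t • u) + z₂‖ := by rw [hw]; congr 1; abel
        _ ≤ _ := norm_add_le _ _
      linarith
    · have heq := h (z₁ + t • u) (by linarith [norm_nonneg z₂])
      have e1 : z₁ + t • u - z₁ = t • u := by abel
      have e2 : z₁ + t • u - z₂ = w + t • u := by rw [hw]; abel
      rwa [e1, e2] at heq
  -- Step 2a : ⟪v₁, w⟫ = 0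
  have hperp : ⟪v₁, w⟫ = 0 := by
    -- find a nonzero vector orthogonal to v₁
    obtain ⟨u, hu_mem, hu0⟩ : ∃ u, u ∈ (ℝ ∙ v₁)ᗮ ∧ u ≠ 0 := by
      apply Submodule.exists_mem_ne_zero_of_ne_bot
      intro hbot
      have h1 := Submodule.finrank_add_finrank_orthogonal (𝕜 := ℝ) (ℝ ∙ v₁)
      rw [hbot, finrank_bot, finrank_span_singleton hv0, finrank_euclideanSpace_fin] at h1
      omega
    have huv : ⟪v₁, u⟫ = 0 := (Submodule.mem_orthogonal_singleton_iff_inner_right).mp hu_mem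
    obtain ⟨t, ht0, -, hwt, heq⟩ := point u hu0
    rw [real_inner_smul_right, huv, mul_zero, zero_div, eq_comm, div_eq_zero_iff] at heq
    rcases heq with heq | heq
    · rwa [inner_add_right, real_inner_smul_right, huv, mul_zero, add_zero] at heq
    · exact absurd heq (pow_pos hwt d).ne'
  -- Step 2b : w = 0
  obtain ⟨t, ht0, -, hwt, heq⟩ := point v₁ hv0
  have hnum : ⟪v₁, w + t • v₁⟫ = t * ‖v₁‖ ^ 2 := by
    rw [inner_add_right, real_inner_smul_right, hperp, zero_add, real_inner_self_eq_norm_sq]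
  have hnum' : ⟪v₁, t • v₁⟫ = t * ‖v₁‖ ^ 2 := by
    rw [real_inner_smul_right, real_inner_self_eq_norm_sq]
  rw [hnum, hnum'] at heq
  have hstv : (0:ℝ) < ‖t • v₁‖ := by rw [norm_smul, Real.norm_of_nonneg ht0.le]; positivity
  have hA : (0:ℝ) < t * ‖v₁‖ ^ 2 := by positivity
  have hnorm_eq : ‖t • v₁‖ = ‖w + t • v₁‖ := by
    have hpow : ‖t • v₁‖ ^ d = ‖w + t • v₁‖ ^ d := by
      have h1 : (t * ‖v₁‖ ^ 2) * ‖w + t • v₁‖ ^ d = (t * ‖v₁‖ ^ 2) * ‖t • v₁‖ ^ d := by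
        rw [div_eq_div_iff (by positivity) (by positivity)] at heq
        linarith [heq]
      exact (mul_left_cancel₀ hA.ne' h1).symm
    exact (pow_left_inj₀ (norm_nonneg _) (norm_nonneg _) (by omega)).mp hpow
  have hw0 : w = 0 := by
    have hsq := congrArg (· ^ 2) hnorm_eq
    rw [norm_add_sq_real] at hsq
    have hin : ⟪w, t • v₁⟫ = 0 := by
      rw [real_inner_smul_right, real_inner_comm, hperp, mul_zero]
    rw [hin] at hsq
    have : ‖w‖ ^ 2 = 0 := by linarith
    have : ‖w‖ = 0 := by nlinarith [norm_nonneg w]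
    exact norm_eq_zero.mp this
  exact ⟨sub_eq_zero.mp (hw ▸ hw0), rfl⟩
end

section
/- Let N ≥ 1 be an integer, λ₁, …, λ_N real numbers, r₁ > r₂ > ⋯ > r_N > 0, and n a positive integer. If the matrix M_N^{(n)} is invertible, then E_N^{(n)} is invertible and F_N^{(n)} (E_N^{(n)})^{−1} = − Υ_N^{(n)} (M_N^{(n)})^{−1}, where F_N^{(n)} = diag(r₁^{n+1}, …, r_N^{n+1}) and Υ_N^{(n)} = diag(r₁^{2n}, …, r_N^{2n}). -/
open Matrix

/-- The `n`-order generalized polarization matrix `M_N^{(n)}` of an `N`-layer concentric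
disk structure: diagonal entries `-2λ_i`, entries `(r_j/r_i)^{2n}` above the diagonal and
`-1` below it (indices shifted by one, from `Fin N` to `{1, …, N}`). -/
noncomputable def GPM (N : ℕ) (lam r : ℕ → ℝ) (n : ℕ) : Matrix (Fin N) (Fin N) ℝ :=
  Matrix.of fun i j =>
    if i = j then -2 * lam ((i : ℕ) + 1)
    else if i < j then (r ((j : ℕ) + 1) / r ((i : ℕ) + 1)) ^ (2 * n)
    else -1

/-- The matrix `E_N^{(n)}`: diagonal entries `2λ_i r_i^{1-n}`, entries
`-r_j^{n+1} r_i^{-2n}` above the diagonal and `r_j^{1-n}` below it. -/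
noncomputable def Emat (N : ℕ) (lam r : ℕ → ℝ) (n : ℕ) : Matrix (Fin N) (Fin N) ℝ :=
  Matrix.of fun i j =>
    if i = j then 2 * lam ((i : ℕ) + 1) * r ((i : ℕ) + 1) ^ ((1 : ℤ) - (n : ℤ))
    else if i < j then -(r ((j : ℕ) + 1) ^ ((n : ℤ) + 1) * r ((i : ℕ) + 1) ^ (-(2 * (n : ℤ))))
    else r ((j : ℕ) + 1) ^ ((1 : ℤ) - (n : ℤ))

/-- If `M_N^{(n)}` is invertible then so is `E_N^{(n)}`, and
`F_N^{(n)} (E_N^{(n)})⁻¹ = - Υ_N^{(n)} (M_N^{(n)})⁻¹` where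
`F_N^{(n)} = diag(r₁^{n+1}, …, r_N^{n+1})` and `Υ_N^{(n)} = diag(r₁^{2n}, …, r_N^{2n})`. -/
theorem Fmat_mul_Emat_inv_eq_neg_Upsilon_mul_GPM_inv
    (N : ℕ) (hN : 1 ≤ N) (lam r : ℕ → ℝ)
    (hr : ∀ k, 1 ≤ k → k < N → r (k + 1) < r k) (hrN : 0 < r N)
    (n : ℕ) (hn : 0 < n) (hM : IsUnit (GPM N lam r n).det) :
    IsUnit (Emat N lam r n).det ∧
      Matrix.diagonal (fun i : Fin N => r ((i : ℕ) + 1) ^ (n + 1)) * (Emat N lam r n)⁻¹ =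
        -(Matrix.diagonal (fun i : Fin N => r ((i : ℕ) + 1) ^ (2 * n)) * (GPM N lam r n)⁻¹) := by
  obtain ⟨m, rfl⟩ : ∃ m, n = m + 1 := ⟨n - 1, by omega⟩
  -- positivity of all radii
  have key : ∀ d k, 1 ≤ k → k + d = N → 0 < r k := by
    intro d
    induction d with
    | zero => intro k hk hkN; exact (by omega : k = N) ▸ hrN
    | succ d ih =>
      intro k hk hkN
      have h1 : 0 < r (k + 1) := ih (k + 1) (by omega) (by omega)
      have h2 : r (k + 1) < r k := hr k hk (by omega)
      linarith
  have hpos : ∀ i : Fin N, 0 < r ((i : ℕ) + 1) := by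
    intro i
    exact key (N - ((i : ℕ) + 1)) ((i : ℕ) + 1) (by omega) (by omega)
  set n := m + 1 with hnm
  set D : Matrix (Fin N) (Fin N) ℝ :=
    Matrix.diagonal (fun j : Fin N => (r ((j : ℕ) + 1) ^ m)⁻¹) with hD
  set Dinv : Matrix (Fin N) (Fin N) ℝ :=
    Matrix.diagonal (fun j : Fin N => r ((j : ℕ) + 1) ^ m) with hDinv
  have hDDinv : D * Dinv = 1 := by
    rw [hD, hDinv, Matrix.diagonal_mul_diagonal]
    have : (fun i : Fin N => (r ((i : ℕ) + 1) ^ m)⁻¹ * r ((i : ℕ) + 1) ^ m)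
        = fun _ : Fin N => (1 : ℝ) := by
      funext i
      exact inv_mul_cancel₀ (pow_ne_zero m (hpos i).ne')
    rw [this, Matrix.diagonal_one]
  have hE : Emat N lam r n = -(GPM N lam r n * D) := by
    ext i j
    have ha : r ((i : ℕ) + 1) ≠ 0 := (hpos i).ne'
    have hb : r ((j : ℕ) + 1) ≠ 0 := (hpos j).ne'
    simp only [Emat, GPM, hD, Matrix.of_apply, Matrix.neg_apply, Matrix.mul_diagonal]
    by_cases hij : i = j
    · subst hij
      simp only [if_pos rfl, eq_self_iff_true, if_true]
      have e1 : ((1 : ℤ) - (n : ℤ)) = -(m : ℤ) := by push_cast [hnm]; ring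
      rw [e1, _root_.zpow_neg, zpow_natCast]
      ring
    · simp only [if_neg hij]
      by_cases hlt : i < j
      · simp only [if_pos hlt]
        have e1 : ((n : ℤ) + 1) = ((n + 1 : ℕ) : ℤ) := by push_cast; ring
        have e2 : (-(2 * (n : ℤ))) = -(((2 * n : ℕ)) : ℤ) := by push_cast; ring
        rw [e1, e2, zpow_natCast, _root_.zpow_neg, zpow_natCast, div_pow]
        field_simp
        ring
      · simp only [if_neg hlt]
        have e1 : ((1 : ℤ) - (n : ℤ)) = -(m : ℤ) := by push_cast [hnm]; ring
        rw [e1, _root_.zpow_neg, zpow_natCast]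
        ring
  set C : Matrix (Fin N) (Fin N) ℝ := -(Dinv * (GPM N lam r n)⁻¹) with hC
  have hEC : Emat N lam r n * C = 1 := by
    rw [hE, hC, neg_mul_neg, Matrix.mul_assoc, ← Matrix.mul_assoc D, hDDinv,
      Matrix.one_mul, Matrix.mul_nonsing_inv _ hM]
  refine ⟨Matrix.isUnit_det_of_right_inverse hEC, ?_⟩
  rw [Matrix.inv_eq_right_inv hEC, hC, hDinv, mul_neg, ← Matrix.mul_assoc,
    Matrix.diagonal_mul_diagonal]
  have hFD : (fun i : Fin N => r ((i : ℕ) + 1) ^ (n + 1) * r ((i : ℕ) + 1) ^ m)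
      = fun i : Fin N => r ((i : ℕ) + 1) ^ (2 * n) := by
    funext i
    rw [← pow_add]
    congr 1
    omega
  rw [hFD]
end

section
/- Let N ≥ 1 be an integer, let σ₀ = 1 and let σ₁, …, σ_N be positive real numbers with σ_k ≠ σ_{k−1} for each k = 1, …, N, and set λ_k := (σ_k + σ_{k−1})/(2(σ_k − σ_{k−1})). Let r₁ > r₂ > ⋯ > r_N > 0. Then for every positive integer n, the generalized polarization matrix M_N^{(n)} is invertible. -/
open Matrix

set_option maxHeartbeats 2000000

/-- For `λ_k = (σ_k + σ_{k-1})/(2(σ_k - σ_{k-1}))` coming from positive conductivities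
`σ_k ≠ σ_{k-1}` (with `σ₀ = 1`) and radii `r₁ > r₂ > ⋯ > r_N > 0`, the generalized
polarization matrix `M_N^{(n)}` is invertible for every positive integer `n`. -/
theorem GPM_isUnit_det (N : ℕ) (hN : 1 ≤ N) (σ lam r : ℕ → ℝ)
    (hσ0 : σ 0 = 1)
    (hσpos : ∀ k, 1 ≤ k → k ≤ N → 0 < σ k)
    (hσne : ∀ k, 1 ≤ k → k ≤ N → σ k ≠ σ (k - 1))
    (hlam : ∀ k, 1 ≤ k → k ≤ N → lam k = (σ k + σ (k - 1)) / (2 * (σ k - σ (k - 1))))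
    (hr : ∀ k, 1 ≤ k → k < N → r (k + 1) < r k) (hrN : 0 < r N) :
    ∀ n : ℕ, 0 < n → IsUnit (GPM N lam r n).det := by
  intro n hn
  -- positivity of all radii in range
  have hrpos : ∀ m, 1 ≤ m → m ≤ N → 0 < r m := by
    intro m h1 h2
    have key : ∀ j, m + j ≤ N → r (m + j) ≤ r m := by
      intro j
      induction j with
      | zero => intro _; simp
      | succ i ih =>
        intro hle
        have h3 := hr (m + i) (by omega) (by omega)
        have h4 := ih (by omega)
        have : m + (i + 1) = (m + i) + 1 := by omega
        rw [this]
        linarith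
    have h5 := key (N - m) (by omega)
    have h6 : m + (N - m) = N := by omega
    rw [h6] at h5
    linarith
  have hσpos' : ∀ m, m ≤ N → 0 < σ m := by
    intro m hm
    rcases Nat.eq_zero_or_pos m with h | h
    · subst h; rw [hσ0]; norm_num
    · exact hσpos m h hm
  obtain ⟨x, hxdef⟩ : ∃ x : ℕ → ℝ, x = fun m => r m ^ (2 * n) := ⟨_, rfl⟩
  have hxpos : ∀ m, 1 ≤ m → m ≤ N → 0 < x m := by
    intro m h1 h2; rw [hxdef]; exact pow_pos (hrpos m h1 h2) _
  have hxlt : ∀ k, 1 ≤ k → k < N → x (k + 1) < x k := by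
    intro k h1 h2
    rw [hxdef]
    exact pow_lt_pow_left₀ (hr k h1 h2) (le_of_lt (hrpos (k + 1) (by omega) (by omega)))
      (by omega)
  rw [isUnit_iff_ne_zero]
  intro hdet
  have hdetT : (GPM N lam r n).transpose.det = 0 := by
    rw [Matrix.det_transpose]; exact hdet
  obtain ⟨v, hv0, hv⟩ := Matrix.exists_mulVec_eq_zero_iff.mpr hdetT
  obtain ⟨e, hedef⟩ : ∃ e : ℕ → ℝ, e = fun j => if h : j < N then v ⟨j, h⟩ else 0 := ⟨_, rfl⟩
  obtain ⟨α, hαdef⟩ : ∃ α : ℕ → ℝ, α = fun k => ∑ j ∈ Finset.range k, e j / x (j + 1) := ⟨_, rfl⟩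
  obtain ⟨β, hβdef⟩ : ∃ β : ℕ → ℝ, β = fun k => ∑ j ∈ Finset.Ico k N, e j := ⟨_, rfl⟩
  have hα0 : α 0 = 0 := by simp [hαdef]
  have hαsucc : ∀ k, α (k + 1) = α k + e k / x (k + 1) := by
    intro k; simp [hαdef, Finset.sum_range_succ]
  have hβN : β N = 0 := by simp [hβdef]
  have hβsucc : ∀ k, k < N → β k = e k + β (k + 1) := by
    intro k hk
    simp only [hβdef]
    exact Finset.sum_eq_sum_Ico_succ_bot hk e
  -- the row equations of the transposed system
  have hrow : ∀ k, k < N → x (k + 1) * α k - 2 * lam (k + 1) * e k - β (k + 1) = 0 := by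
    intro k hk
    have h0 := congrFun hv ⟨k, hk⟩
    simp only [Matrix.mulVec, dotProduct, Matrix.transpose_apply, Pi.zero_apply] at h0
    have hterm : ∀ j : Fin N, GPM N lam r n j ⟨k, hk⟩ * v j =
        (fun m => (if m = k then -2 * lam (k + 1)
          else if m < k then x (k + 1) / x (m + 1) else -1) * e m) (j : ℕ) := by
      intro j
      have hej : e (j : ℕ) = v j := by
        simp only [hedef]
        rw [dif_pos j.isLt]
      simp only [GPM, Matrix.of_apply]
      by_cases hjk : (j : ℕ) = k
      · have hj : j = (⟨k, hk⟩ : Fin N) := Fin.ext hjk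
        rw [if_pos hj, if_pos hjk, hej, hjk]
      · have hj : j ≠ (⟨k, hk⟩ : Fin N) := fun h => hjk (by rw [h])
        rw [if_neg hj, if_neg hjk]
        by_cases hlt : (j : ℕ) < k
        · have hjlt : j < (⟨k, hk⟩ : Fin N) := by
            rw [Fin.lt_def]; exact hlt
          rw [if_pos hjlt, if_pos hlt, hej]
          rw [hxdef]
          rw [div_pow]
        · have hjlt : ¬ j < (⟨k, hk⟩ : Fin N) := by
            rw [Fin.lt_def]; exact hlt
          rw [if_neg hjlt, if_neg hlt, hej]
    rw [Finset.sum_congr rfl (fun j _ => hterm j)] at h0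
    rw [Fin.sum_univ_eq_sum_range (fun m => (if m = k then -2 * lam (k + 1)
      else if m < k then x (k + 1) / x (m + 1) else -1) * e m) N] at h0
    have hsplit : ∑ m ∈ Finset.range N,
        (if m = k then -2 * lam (k + 1) else if m < k then x (k + 1) / x (m + 1) else -1) * e m
        = x (k + 1) * α k + (-2 * lam (k + 1)) * e k + (- β (k + 1)) := by
      rw [Finset.range_eq_Ico, ← Finset.sum_Ico_consecutive _ (Nat.zero_le (k + 1)) hk,
        ← Finset.range_eq_Ico, Finset.sum_range_succ]
      have h1 : ∑ m ∈ Finset.range k,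
          (if m = k then -2 * lam (k + 1) else if m < k then x (k + 1) / x (m + 1) else -1) * e m
          = x (k + 1) * α k := by
        rw [hαdef, Finset.mul_sum]
        apply Finset.sum_congr rfl
        intro m hm
        have hmk : m < k := Finset.mem_range.mp hm
        rw [if_neg (by omega), if_pos hmk]
        ring
      have h2 : ∑ m ∈ Finset.Ico (k + 1) N,
          (if m = k then -2 * lam (k + 1) else if m < k then x (k + 1) / x (m + 1) else -1) * e m
          = - β (k + 1) := by
        rw [hβdef, ← Finset.sum_neg_distrib]
        apply Finset.sum_congr rfl
        intro m hm
        have hmk : k + 1 ≤ m := (Finset.mem_Ico.mp hm).1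
        rw [if_neg (by omega), if_neg (by omega)]
        ring
      rw [h1, h2, if_pos rfl]
    rw [hsplit] at h0
    linarith
  -- the interface energy identity
  have key : ∀ k, k < N →
      σ (k + 1) * ((α k * x (k + 1)) ^ 2 - (β k) ^ 2)
        = σ k * ((α (k + 1) * x (k + 1)) ^ 2 - (β (k + 1)) ^ 2) := by
    intro k hk
    have hx1 : x (k + 1) ≠ 0 := ne_of_gt (hxpos (k + 1) (by omega) (by omega))
    have hα1 : α (k + 1) * x (k + 1) = α k * x (k + 1) + e k := by
      rw [hαsucc]; field_simp
    have hβ1 : β k = e k + β (k + 1) := hβsucc k hk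
    have hW := hrow k hk
    have hl := hlam (k + 1) (by omega) (by omega)
    simp only [Nat.add_sub_cancel] at hl
    have hne : σ (k + 1) - σ k ≠ 0 := by
      have := hσne (k + 1) (by omega) (by omega)
      simp only [Nat.add_sub_cancel] at this
      exact sub_ne_zero.mpr this
    have hW2 : (σ (k + 1) - σ k) * (x (k + 1) * α k - β (k + 1))
        = (σ (k + 1) + σ k) * e k := by
      have h3 : x (k + 1) * α k - β (k + 1)
          = 2 * ((σ (k + 1) + σ k) / (2 * (σ (k + 1) - σ k))) * e k := by
        rw [← hl]; linarith
      rw [h3]; field_simp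
    rw [hβ1, hα1]
    linear_combination (α k * x (k + 1) + β (k + 1) + e k) * hW2
  -- forward chain : the flux quantity is nonpositive at each outer boundary
  have claimT : ∀ k, k ≤ N → 1 ≤ k → (α k * x k) ^ 2 - (β k) ^ 2 ≤ 0 := by
    intro k
    induction k with
    | zero => intro _ h; omega
    | succ m ih =>
      intro hle _
      rcases Nat.eq_zero_or_pos m with hm0 | hm1
      · subst hm0
        have hk := key 0 (by omega)
        rw [hα0] at hk
        have h1 : 0 < σ 1 := hσpos' 1 (by omega)
        have h0 : 0 < σ 0 := hσpos' 0 (by omega)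
        nlinarith [sq_nonneg (β 0)]
      · have hTm := ih (by omega) hm1
        have hxl : x (m + 1) < x m := hxlt m hm1 (by omega)
        have hxp : 0 < x (m + 1) := hxpos (m + 1) (by omega) (by omega)
        have hx2 : (x (m + 1)) ^ 2 ≤ (x m) ^ 2 := by nlinarith
        have step1 : (α m * x (m + 1)) ^ 2 - (β m) ^ 2 ≤ 0 := by
          nlinarith [sq_nonneg (α m), mul_le_mul_of_nonneg_left hx2 (sq_nonneg (α m))]
        have hk := key m (by omega)
        have hs1 : 0 < σ (m + 1) := hσpos' (m + 1) hle
        have hs0 : 0 < σ m := hσpos' m (by omega)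
        nlinarith
  -- at the innermost boundary the flux is nonnegative, hence zero
  have hxN : 0 < x N := hxpos N hN le_rfl
  have hTN := claimT N le_rfl hN
  have hαN : α N = 0 := by
    rw [hβN] at hTN
    have h1 : α N * x N = 0 := by nlinarith [sq_nonneg (α N * x N)]
    exact (mul_eq_zero.mp h1).resolve_right (ne_of_gt hxN)
  -- backward chain : all α's vanish
  have back : ∀ j, j ≤ N → α (N - j) = 0 ∧
      (1 ≤ N - j → (α (N - j) * x (N - j)) ^ 2 - (β (N - j)) ^ 2 = 0) := by
    intro j
    induction j with
    | zero =>
      intro _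
      simp only [Nat.sub_zero]
      exact ⟨hαN, fun _ => by rw [hαN, hβN]; ring⟩
    | succ i ih =>
      intro hle
      obtain ⟨ihα, ihT⟩ := ih (by omega)
      obtain ⟨k, hkdef⟩ : ∃ k, k = N - (i + 1) := ⟨_, rfl⟩
      rw [← hkdef]
      have hki : N - i = k + 1 := by omega
      rw [hki] at ihα ihT
      have hTk1 : (α (k + 1) * x (k + 1)) ^ 2 - (β (k + 1)) ^ 2 = 0 := ihT (by omega)
      have hkey := key k (by omega)
      rw [hTk1, mul_zero] at hkey
      have hs : 0 < σ (k + 1) := hσpos' (k + 1) (by omega)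
      have h2 : (α k * x (k + 1)) ^ 2 - (β k) ^ 2 = 0 :=
        (mul_eq_zero.mp hkey).resolve_left (ne_of_gt hs)
      rcases Nat.eq_zero_or_pos k with hk0 | hk1
      · constructor
        · rw [hk0]; exact hα0
        · intro h; omega
      · have hTk_le := claimT k (by omega) hk1
        have hxl : x (k + 1) < x k := hxlt k hk1 (by omega)
        have hxp : 0 < x (k + 1) := hxpos (k + 1) (by omega) (by omega)
        have hx2 : (x (k + 1)) ^ 2 < (x k) ^ 2 := by nlinarith
        have hαk : α k = 0 := by
          have h3 : (α k) ^ 2 * ((x k) ^ 2 - (x (k + 1)) ^ 2) ≤ 0 := by nlinarith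
          have h4 : (α k) ^ 2 ≤ 0 := by
            by_contra h5
            push_neg at h5
            nlinarith
          have h6 : (α k) ^ 2 = 0 := le_antisymm h4 (sq_nonneg _)
          exact pow_eq_zero_iff (by norm_num) |>.mp h6
        constructor
        · exact hαk
        · intro _
          rw [hαk] at h2 ⊢
          nlinarith
  have hαall : ∀ j, j ≤ N → α j = 0 := by
    intro j hj
    have h := (back (N - j) (by omega)).1
    rwa [show N - (N - j) = j by omega] at h
  -- conclude v = 0, contradiction
  apply hv0
  funext i
  have h1 : α ((i : ℕ) + 1) = 0 := hαall _ i.isLt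
  have h2 : α (i : ℕ) = 0 := hαall _ (le_of_lt i.isLt)
  have h3 := hαsucc (i : ℕ)
  rw [h1, h2] at h3
  have hx1 : x ((i : ℕ) + 1) ≠ 0 :=
    ne_of_gt (hxpos _ (by omega) (by exact_mod_cast i.isLt))
  have h4 : e (i : ℕ) = 0 := by
    have h7 : e (i : ℕ) / x ((i : ℕ) + 1) = 0 := by linarith
    rcases div_eq_zero_iff.mp h7 with h | h
    · exact h
    · exact absurd h hx1
  have h5 : e (i : ℕ) = v i := by
    simp only [hedef]
    rw [dif_pos i.isLt]
  rw [← h5, h4]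
  rfl
end

section
/- Let σ₀, σ₁, σ₂ be positive real numbers with σ₁ ≠ σ₀ and σ₂ ≠ σ₁, let r₁ > r₂ > 0, and set λ₁ := (σ₁ + σ₀)/(2(σ₁ − σ₀)), λ₂ := (σ₂ + σ₁)/(2(σ₂ − σ₁)), f₁ := r₂²/r₁², f₂ := 1 − f₁. Let M be the 2×2 matrix with rows (−2λ₁, (r₂/r₁)²) and (−1, −2λ₂), and let Υ = diag(r₁², r₂²). Then M is invertible, and eᵀ Υ M^{−1} e = 0 (where e = (1,1)ᵀ) if and only if σ₀ = σ₁ + 2σ₁ f₁ (σ₂ − σ₁)/(2σ₁ + f₂ (σ₂ − σ₁)) (the Hashin–Shtrikman formula). -/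
open Matrix

/-- For a two-layer concentric disk, the first-order generalized polarization matrix `M`
is invertible, and the neutrality condition `eᵀ Υ M⁻¹ e = 0` holds if and only if the
background conductivity `σ₀` satisfies the Hashin–Shtrikman formula. -/
theorem hashin_shtrikman (σ₀ σ₁ σ₂ : ℝ) (hσ₀ : 0 < σ₀) (hσ₁ : 0 < σ₁) (hσ₂ : 0 < σ₂)
    (h10 : σ₁ ≠ σ₀) (h21 : σ₂ ≠ σ₁)
    (r₁ r₂ : ℝ) (hr : r₂ < r₁) (hr₂ : 0 < r₂)
    (lam₁ lam₂ f₁ f₂ : ℝ)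
    (hlam₁ : lam₁ = (σ₁ + σ₀) / (2 * (σ₁ - σ₀)))
    (hlam₂ : lam₂ = (σ₂ + σ₁) / (2 * (σ₂ - σ₁)))
    (hf₁ : f₁ = r₂ ^ 2 / r₁ ^ 2) (hf₂ : f₂ = 1 - f₁)
    (M : Matrix (Fin 2) (Fin 2) ℝ)
    (hM : M = !![-2 * lam₁, (r₂ / r₁) ^ 2; -1, -2 * lam₂])
    (Υ : Matrix (Fin 2) (Fin 2) ℝ)
    (hΥ : Υ = Matrix.diagonal ![r₁ ^ 2, r₂ ^ 2]) :
    IsUnit M.det ∧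
      ((fun _ : Fin 2 => (1 : ℝ)) ⬝ᵥ ((Υ * M⁻¹) *ᵥ fun _ : Fin 2 => (1 : ℝ)) = 0 ↔
        σ₀ = σ₁ + 2 * σ₁ * f₁ * (σ₂ - σ₁) / (2 * σ₁ + f₂ * (σ₂ - σ₁))) := by
  subst hlam₁ hlam₂ hf₁ hf₂ hM hΥ
  have hr₁ : (0:ℝ) < r₁ := hr₂.trans hr
  have hr₁' : r₁ ≠ 0 := hr₁.ne'
  have hr₂' : r₂ ≠ 0 := hr₂.ne'
  have ha : σ₁ - σ₀ ≠ 0 := sub_ne_zero.mpr h10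
  have hb : σ₂ - σ₁ ≠ 0 := sub_ne_zero.mpr h21
  have hf₁pos : 0 < r₂ ^ 2 / r₁ ^ 2 := by positivity
  have hf₁lt : r₂ ^ 2 / r₁ ^ 2 < 1 := by
    rw [div_lt_one (by positivity)]
    nlinarith
  -- the numerator of the determinant is positive
  have hNpos : 0 < (σ₁ + σ₀) * (σ₂ + σ₁) + (r₂ ^ 2 / r₁ ^ 2) * ((σ₁ - σ₀) * (σ₂ - σ₁)) := by
    nlinarith [mul_pos hf₁pos (mul_pos hσ₁ hσ₂), mul_pos hf₁pos (mul_pos hσ₀ hσ₁),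
      mul_pos (sub_pos.mpr hf₁lt) (mul_pos hσ₀ hσ₂),
      mul_pos (sub_pos.mpr hf₁lt) (mul_pos hσ₁ hσ₁)]
  set A : Matrix (Fin 2) (Fin 2) ℝ :=
    !![-2 * ((σ₁ + σ₀) / (2 * (σ₁ - σ₀))), (r₂ / r₁) ^ 2; -1,
      -2 * ((σ₂ + σ₁) / (2 * (σ₂ - σ₁)))] with hA
  have hdet : A.det =
      ((σ₁ + σ₀) * (σ₂ + σ₁) + (r₂ ^ 2 / r₁ ^ 2) * ((σ₁ - σ₀) * (σ₂ - σ₁))) /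
        ((σ₁ - σ₀) * (σ₂ - σ₁)) := by
    rw [hA, Matrix.det_fin_two_of]
    field_simp
    ring
  have hdet' : A.det ≠ 0 := by
    rw [hdet]
    exact div_ne_zero hNpos.ne' (mul_ne_zero ha hb)
  refine ⟨isUnit_iff_ne_zero.mpr hdet', ?_⟩
  have hinv : A⁻¹ = A.det⁻¹ • A.adjugate := by
    rw [Matrix.inv_def, Ring.inverse_eq_inv']
  have hlhs : (fun _ : Fin 2 => (1 : ℝ)) ⬝ᵥ
      ((Matrix.diagonal ![r₁ ^ 2, r₂ ^ 2] * A⁻¹) *ᵥ fun _ : Fin 2 => (1 : ℝ)) =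
      A.det⁻¹ * (r₁ ^ 2 * (-2 * ((σ₂ + σ₁) / (2 * (σ₂ - σ₁))) - (r₂ / r₁) ^ 2) +
        r₂ ^ 2 * (1 + -2 * ((σ₁ + σ₀) / (2 * (σ₁ - σ₀))))) := by
    rw [hinv, hA, Matrix.adjugate_fin_two_of]
    simp [Matrix.mul_apply, Matrix.mulVec, dotProduct, Fin.sum_univ_two,
      Matrix.diagonal, Matrix.smul_apply]
    ring
  rw [hlhs]
  -- the key scalar quantity
  have hE : r₁ ^ 2 * (-2 * ((σ₂ + σ₁) / (2 * (σ₂ - σ₁))) - (r₂ / r₁) ^ 2) +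
      r₂ ^ 2 * (1 + -2 * ((σ₁ + σ₀) / (2 * (σ₁ - σ₀)))) =
      -((σ₂ + σ₁) * (σ₁ - σ₀) * r₁ ^ 2 + (σ₁ + σ₀) * (σ₂ - σ₁) * r₂ ^ 2) /
        ((σ₁ - σ₀) * (σ₂ - σ₁)) := by
    field_simp
    ring
  have hD : 2 * σ₁ + (1 - r₂ ^ 2 / r₁ ^ 2) * (σ₂ - σ₁) ≠ 0 := by
    have h' : 0 < (1 - r₂ ^ 2 / r₁ ^ 2) * σ₂ + (1 + r₂ ^ 2 / r₁ ^ 2) * σ₁ := by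
      nlinarith [mul_pos (sub_pos.mpr hf₁lt) hσ₂, mul_pos hf₁pos hσ₁]
    intro h
    apply h'.ne'
    linarith
  rw [hE, mul_eq_zero, div_eq_zero_iff, neg_eq_zero]
  have hsimp : (A.det⁻¹ = 0 ∨
      (σ₂ + σ₁) * (σ₁ - σ₀) * r₁ ^ 2 + (σ₁ + σ₀) * (σ₂ - σ₁) * r₂ ^ 2 = 0 ∨
        (σ₁ - σ₀) * (σ₂ - σ₁) = 0) ↔
      (σ₂ + σ₁) * (σ₁ - σ₀) * r₁ ^ 2 + (σ₁ + σ₀) * (σ₂ - σ₁) * r₂ ^ 2 = 0 := by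
    simp [inv_eq_zero, hdet', mul_ne_zero ha hb]
  rw [hsimp]
  constructor
  · intro hP
    have hkey : (σ₀ - σ₁) * (2 * σ₁ + (1 - r₂ ^ 2 / r₁ ^ 2) * (σ₂ - σ₁)) =
        2 * σ₁ * (r₂ ^ 2 / r₁ ^ 2) * (σ₂ - σ₁) := by
      field_simp
      linear_combination -hP
    have := (eq_div_iff hD).mpr hkey
    linarith
  · intro hQ
    have h5 : σ₀ - σ₁ =
        2 * σ₁ * (r₂ ^ 2 / r₁ ^ 2) * (σ₂ - σ₁) / (2 * σ₁ + (1 - r₂ ^ 2 / r₁ ^ 2) * (σ₂ - σ₁)) := by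
      linarith
    have hkey := (eq_div_iff hD).mp h5
    field_simp at hkey
    linear_combination -hkey
end

section
/- Let N ≥ 1 be an integer. For j = 1, 2, let σ₀^{(j)} = 1 and σ₁^{(j)}, …, σ_N^{(j)} be positive real numbers with σ_k^{(j)} ≠ σ_{k−1}^{(j)} for each k, set λ_k^{(j)} := (σ_k^{(j)} + σ_{k−1}^{(j)})/(2(σ_k^{(j)} − σ_{k−1}^{(j)})), and let r₁^{(j)} > r₂^{(j)} > ⋯ > r_N^{(j)} > 0. Let M_{N,j}^{(n)} and Υ_{N,j}^{(n)} be the N×N matrices built from (λ^{(j)}, r^{(j)}), and assume M_{N,j}^{(n)} is invertible for every positive integer n and j = 1, 2. If there exists n₀ such that eᵀ Υ_{N,1}^{(n)} (M_{N,1}^{(n)})^{−1} e = eᵀ Υ_{N,2}^{(n)} (M_{N,2}^{(n)})^{−1} e for every integer n ≥ n₀, then r_k^{(1)} = r_k^{(2)} for every k = 1, …, N. -/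
/-!
Block elimination of the first unknown shows that the measurement of `N + 1` layers, in units of
`r₁^{2n}`, is the Möbius image `(1 - 2λ₁ u) / (u - 2λ₁)` of the measurement `u` of the inner `N`
layers in the same units. The inner radii are smaller, so `u → 0` and the measurement is
asymptotic to `-r₁^{2n} / (2λ₁)`; equal measurements therefore force equal `r₁` and `λ₁`.
Positive conductivities give `|2λ₁| > 1`, so this Möbius map (of determinant `4λ₁² - 1`) is
injective and the inner measurements agree too; induction on `N` concludes. The matrices are
invertible for large `n` because they tend to a lower triangular matrix with diagonal `-2λ_k ≠ 0`.
-/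

open Matrix Filter Topology Set

noncomputable def Upsilon (N : ℕ) (r : ℕ → ℝ) (n : ℕ) : Matrix (Fin N) (Fin N) ℝ :=
  Matrix.diagonal fun i : Fin N => r ((i : ℕ) + 1) ^ (2 * n)

noncomputable def measurement (N : ℕ) (lam r : ℕ → ℝ) (n : ℕ) : ℝ :=
  (fun _ : Fin N => (1 : ℝ)) ⬝ᵥ ((Upsilon N r n * (GPM N lam r n)⁻¹) *ᵥ fun _ : Fin N => (1 : ℝ))

noncomputable def layerMap (a u : ℝ) : ℝ := (1 - a * u) / (u - a)

lemma mulVec_nonsing_inv_mulVec {ι R : Type*} [Fintype ι] [DecidableEq ι] [CommRing R]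
    {A : Matrix ι ι R} (hA : IsUnit A.det) (v : ι → R) : A *ᵥ (A⁻¹ *ᵥ v) = v := by
  rw [mulVec_mulVec, mul_nonsing_inv _ hA, one_mulVec]

section Algebra

variable (N : ℕ) (lam r : ℕ → ℝ) (n : ℕ)

lemma measurement_eq_sum :
    measurement N lam r n = ∑ i : Fin N, r (i + 1) ^ (2 * n) * ((GPM N lam r n)⁻¹ *ᵥ 1) i := by
  simp [measurement, dotProduct, ← mulVec_mulVec, Upsilon, mulVec_diagonal, Pi.one_def]

lemma measurement_div_eq_sum (a : ℝ) :
    measurement N lam r n / a ^ (2 * n) =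
      ∑ i : Fin N, (r (i + 1) / a) ^ (2 * n) * ((GPM N lam r n)⁻¹ *ᵥ 1) i := by
  simp only [measurement_eq_sum, Finset.sum_div, div_pow]
  exact Finset.sum_congr rfl fun i _ => by ring

lemma GPM_succ_mulVec_cons (x : ℝ) (v : Fin N → ℝ) :
    GPM (N + 1) lam r n *ᵥ Fin.cons x v =
      Fin.cons (-2 * lam 1 * x + ∑ j : Fin N, (r (j + 1 + 1) / r 1) ^ (2 * n) * v j)
        (fun i => -x + (GPM N (fun k => lam (k + 1)) (fun k => r (k + 1)) n *ᵥ v) i) := by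
  ext i
  cases i using Fin.cases with
  | zero =>
    simp [mulVec, dotProduct, Fin.sum_univ_succ, GPM, (Fin.succ_ne_zero _).symm]
  | succ i => simp [mulVec, dotProduct, Fin.sum_univ_succ, GPM, Fin.succ_ne_zero i]

variable {N lam r n}

lemma measurement_tail_div_ne (hM : IsUnit (GPM (N + 1) lam r n).det)
    (hM' : IsUnit (GPM N (fun k => lam (k + 1)) (fun k => r (k + 1)) n).det) :
    measurement N (fun k => lam (k + 1)) (fun k => r (k + 1)) n / r 1 ^ (2 * n) ≠ 2 * lam 1 := by
  intro hu
  rw [measurement_div_eq_sum] at hu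
  set w := (GPM N (fun k => lam (k + 1)) (fun k => r (k + 1)) n)⁻¹ *ᵥ 1
  have hker : GPM (N + 1) lam r n *ᵥ Fin.cons 1 w = 0 := by
    rw [GPM_succ_mulVec_cons, mulVec_nonsing_inv_mulVec hM' 1]
    ext i
    cases i using Fin.cases with
    | zero => simp [hu]
    | succ i => simp
  simpa using congrFun (eq_zero_of_mulVec_eq_zero hM.ne_zero hker) 0

lemma measurement_succ_div (hM : IsUnit (GPM (N + 1) lam r n).det)
    (hM' : IsUnit (GPM N (fun k => lam (k + 1)) (fun k => r (k + 1)) n).det) (hr : r 1 ≠ 0) :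
    measurement (N + 1) lam r n / r 1 ^ (2 * n) =
      layerMap (2 * lam 1) (measurement N (fun k => lam (k + 1)) (fun k => r (k + 1)) n /
        r 1 ^ (2 * n)) := by
  have hu := measurement_tail_div_ne hM hM'
  set u := measurement N (fun k => lam (k + 1)) (fun k => r (k + 1)) n / r 1 ^ (2 * n) with hu_def
  rw [measurement_div_eq_sum] at hu_def
  set w := (GPM N (fun k => lam (k + 1)) (fun k => r (k + 1)) n)⁻¹ *ᵥ 1
  have hsum (c : ℝ) : ∑ j : Fin N, (r (j + 1 + 1) / r 1) ^ (2 * n) * (c * w j) = c * u := by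
    rw [hu_def, Finset.mul_sum]
    exact Finset.sum_congr rfl fun _ _ => by ring
  have hdenom : u - 2 * lam 1 ≠ 0 := sub_ne_zero.2 hu
  -- Solve `M z = 1` by block elimination of the first unknown.
  obtain ⟨z₁, hz₁⟩ : ∃ z₁, z₁ * (u - 2 * lam 1) = 1 - u := ⟨_, div_mul_cancel₀ _ hdenom⟩
  have hsol : GPM (N + 1) lam r n *ᵥ Fin.cons z₁ ((1 + z₁) • w) = 1 := by
    rw [GPM_succ_mulVec_cons, mulVec_smul, mulVec_nonsing_inv_mulVec hM' 1]
    ext i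
    cases i using Fin.cases with
    | zero =>
      simp only [Fin.cons_zero, Pi.smul_apply, smul_eq_mul, Pi.one_apply, hsum]
      linear_combination hz₁
    | succ i => simp
  have hinv : (GPM (N + 1) lam r n)⁻¹ *ᵥ 1 = Fin.cons z₁ ((1 + z₁) • w) := by
    rw [← hsol, mulVec_mulVec, nonsing_inv_mul _ hM, one_mulVec]
  rw [measurement_div_eq_sum, hinv, Fin.sum_univ_succ]
  simp only [Fin.cons_zero, Fin.cons_succ, Fin.val_zero, Fin.val_succ, zero_add, div_self hr,
    one_pow, one_mul, Pi.smul_apply, smul_eq_mul, hsum]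
  rw [layerMap, eq_div_iff hdenom]
  linear_combination (1 + u) * hz₁

end Algebra

lemma layerMap_injOn {a : ℝ} (ha : a ^ 2 ≠ 1) : InjOn (layerMap a) {a}ᶜ := by
  intro u hu v hv h
  rw [layerMap, layerMap, div_eq_div_iff (sub_ne_zero.2 hu) (sub_ne_zero.2 hv)] at h
  have hprod : (a ^ 2 - 1) * (u - v) = 0 := by linear_combination h
  exact sub_eq_zero.1 ((mul_eq_zero.1 hprod).resolve_left (sub_ne_zero.2 ha))

lemma tendsto_layerMap {α : Type*} {l : Filter α} {a : ℝ} (ha : a ≠ 0) {u : α → ℝ}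
    (hu : Tendsto u l (𝓝 0)) : Tendsto (fun x => layerMap a (u x)) l (𝓝 (-a⁻¹)) := by
  have := (tendsto_const_nhds (x := (1 : ℝ)).sub (hu.const_mul a)).div
    (hu.sub (tendsto_const_nhds (x := a))) (by simpa using ha)
  rwa [mul_zero, sub_zero, zero_sub, div_neg, one_div] at this

lemma tendsto_pow_two_mul_nhds_zero {q : ℝ} (h0 : 0 ≤ q) (h1 : q < 1) :
    Tendsto (fun n : ℕ => q ^ (2 * n)) atTop (𝓝 0) := by
  simpa only [pow_mul] using
    tendsto_pow_atTop_nhds_zero_of_lt_one (sq_nonneg q) (pow_lt_one₀ h0 h1 two_ne_zero)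

lemma eq_one_of_tendsto_pow {K : Type*} [DivisionRing K] [TopologicalSpace K] [ContinuousMul K]
    [T2Space K] {a c : K} (h : Tendsto (fun n : ℕ => a ^ n) atTop (𝓝 c)) (hc : c ≠ 0) :
    a = 1 := by
  have hshift : Tendsto (fun n : ℕ => a ^ (n + 1)) atTop (𝓝 (a * c)) := by
    simpa only [pow_succ'] using h.const_mul a
  exact (mul_eq_right₀ hc).1 (tendsto_nhds_unique hshift (h.comp (tendsto_add_atTop_nat 1)))

lemma one_lt_abs_two_mul_contrast {a b : ℝ} (ha : 0 < a) (hb : 0 < b) (hab : a ≠ b) :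
    1 < |2 * ((a + b) / (2 * (a - b)))| := by
  rw [mul_div_assoc', mul_div_mul_left _ _ two_ne_zero, abs_div,
    one_lt_div (abs_pos.2 (sub_ne_zero.2 hab)), abs_of_pos (add_pos ha hb)]
  exact abs_sub_lt_iff.2 ⟨by linarith, by linarith⟩

structure Admissible (N : ℕ) (lam r : ℕ → ℝ) : Prop where
  one_lt_abs_two_mul_lam : ∀ k ∈ Icc 1 N, 1 < |2 * lam k|
  radius_pos : ∀ k ∈ Icc 1 N, 0 < r k
  radius_strictAntiOn : StrictAntiOn r (Icc 1 N)

namespace Admissible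

variable {N : ℕ} {lam r lam₁ lam₂ r₁ r₂ : ℕ → ℝ}

lemma tail (h : Admissible (N + 1) lam r) :
    Admissible N (fun k => lam (k + 1)) (fun k => r (k + 1)) := by
  have hmem {k : ℕ} (hk : k ∈ Icc 1 N) : k + 1 ∈ Icc 1 (N + 1) :=
    ⟨le_add_self, Nat.succ_le_succ hk.2⟩
  exact ⟨fun k hk => h.one_lt_abs_two_mul_lam _ (hmem hk), fun k hk => h.radius_pos _ (hmem hk),
    fun a ha b hb hab => h.radius_strictAntiOn (hmem ha) (hmem hb) (by omega)⟩

lemma two_mul_lam_ne_zero (h : Admissible N lam r) {k : ℕ} (hk : k ∈ Icc 1 N) :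
    2 * lam k ≠ 0 := by
  have := h.one_lt_abs_two_mul_lam k hk
  contrapose! this
  simp [this]

lemma tendsto_div_pow (h : Admissible N lam r) {i j : ℕ} (hi : i ∈ Icc 1 N) (hj : j ∈ Icc 1 N)
    (hij : i < j) : Tendsto (fun n : ℕ => (r j / r i) ^ (2 * n)) atTop (𝓝 0) :=
  tendsto_pow_two_mul_nhds_zero (div_nonneg (h.radius_pos j hj).le (h.radius_pos i hi).le)
    ((div_lt_one (h.radius_pos i hi)).2 (h.radius_strictAntiOn hi hj hij))

lemma eventually_isUnit_det (h : Admissible N lam r) :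
    ∀ᶠ n in atTop, IsUnit (GPM N lam r n).det := by
  set L : Matrix (Fin N) (Fin N) ℝ :=
    of fun i j => if i = j then -2 * lam (i + 1) else if i < j then 0 else -1
  have hlim : Tendsto (GPM N lam r) atTop (𝓝 L) := by
    refine tendsto_pi_nhds.2 fun i => tendsto_pi_nhds.2 fun j => ?_
    simp only [GPM, L, of_apply]
    split_ifs with hij hlt
    · exact tendsto_const_nhds
    · exact h.tendsto_div_pow ⟨by omega, by omega⟩ ⟨by omega, by omega⟩
        (by simpa using Fin.lt_def.1 hlt)
    · exact tendsto_const_nhds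
  have hL : L.det ≠ 0 := by
    rw [det_of_isLowerTriangular L fun i j (hij : i < j) => by simp [L, hij.ne, hij]]
    refine Finset.prod_ne_zero_iff.2 fun i _ => ?_
    simpa [L] using h.two_mul_lam_ne_zero (k := i + 1) ⟨by omega, by omega⟩
  filter_upwards [((continuous_id.matrix_det).tendsto L).comp hlim |>.eventually_ne hL]
    with n hn using isUnit_iff_ne_zero.2 hn

lemma eventually_measurement_succ_div (h : Admissible (N + 1) lam r) :
    ∀ᶠ n in atTop, measurement (N + 1) lam r n / r 1 ^ (2 * n) =
      layerMap (2 * lam 1) (measurement N (fun k => lam (k + 1)) (fun k => r (k + 1)) n /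
        r 1 ^ (2 * n)) := by
  filter_upwards [h.eventually_isUnit_det, h.tail.eventually_isUnit_det] with n hM hM'
  exact measurement_succ_div hM hM' (h.radius_pos 1 ⟨le_rfl, by omega⟩).ne'

lemma tendsto_measurement_div_of_tail (h : Admissible (N + 1) lam r)
    (htail : Tendsto (fun n => measurement N (fun k => lam (k + 1)) (fun k => r (k + 1)) n /
      r 1 ^ (2 * n)) atTop (𝓝 0)) :
    Tendsto (fun n => measurement (N + 1) lam r n / r 1 ^ (2 * n)) atTop
      (𝓝 (-(2 * lam 1)⁻¹)) :=
  (tendsto_layerMap (h.two_mul_lam_ne_zero ⟨le_rfl, by omega⟩) htail).congr'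
    (h.eventually_measurement_succ_div.mono fun _ hn => hn.symm)

lemma tendsto_tail_measurement_div (h : Admissible (N + 1) lam r) :
    Tendsto (fun n => measurement N (fun k => lam (k + 1)) (fun k => r (k + 1)) n /
      r 1 ^ (2 * n)) atTop (𝓝 0) := by
  induction N generalizing lam r with
  | zero => simp [measurement_eq_sum]
  | succ N ih =>
    have htail := ih h.tail
    have hinner := h.tail.tendsto_measurement_div_of_tail htail
    have hdecay := h.tendsto_div_pow (i := 1) (j := 2) ⟨le_rfl, by omega⟩ ⟨by omega, by omega⟩
      one_lt_two
    have hr₂ : r 2 ≠ 0 := (h.radius_pos 2 ⟨by omega, by omega⟩).ne'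
    have hprod := hinner.mul hdecay
    rw [mul_zero] at hprod
    refine hprod.congr fun n => ?_
    rw [div_pow]
    field_simp

lemma tendsto_measurement_div (h : Admissible (N + 1) lam r) :
    Tendsto (fun n => measurement (N + 1) lam r n / r 1 ^ (2 * n)) atTop
      (𝓝 (-(2 * lam 1)⁻¹)) :=
  h.tendsto_measurement_div_of_tail h.tendsto_tail_measurement_div

lemma first_layer_eq (h₁ : Admissible (N + 1) lam₁ r₁) (h₂ : Admissible (N + 1) lam₂ r₂)
    (heq : ∀ᶠ n in atTop, measurement (N + 1) lam₁ r₁ n = measurement (N + 1) lam₂ r₂ n) :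
    r₁ 1 = r₂ 1 ∧ lam₁ 1 = lam₂ 1 := by
  have hmem : 1 ∈ Icc 1 (N + 1) := ⟨le_rfl, by omega⟩
  have hc₁ : -(2 * lam₁ 1)⁻¹ ≠ 0 := by simpa using h₁.two_mul_lam_ne_zero hmem
  have hc₂ : -(2 * lam₂ 1)⁻¹ ≠ 0 := by simpa using h₂.two_mul_lam_ne_zero hmem
  have hr₁ := h₁.radius_pos 1 hmem
  have hr₂ := h₂.radius_pos 1 hmem
  have hlim₁ := h₁.tendsto_measurement_div
  have hlim₂ := h₂.tendsto_measurement_div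
  have hratio : Tendsto (fun n : ℕ => ((r₁ 1 / r₂ 1) ^ 2) ^ n) atTop
      (𝓝 (-(2 * lam₂ 1)⁻¹ / -(2 * lam₁ 1)⁻¹)) := by
    refine (hlim₂.div hlim₁ hc₁).congr' ?_
    filter_upwards [heq, hlim₁.eventually_ne hc₁] with n hn hne
    have hm : measurement (N + 1) lam₁ r₁ n ≠ 0 := fun h0 => hne (by simp [h0])
    rw [Pi.div_apply, ← hn, ← pow_mul, div_pow]
    field_simp
  have hr : r₁ 1 = r₂ 1 := by
    have hsq := eq_one_of_tendsto_pow hratio (div_ne_zero hc₂ hc₁)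
    rwa [pow_eq_one_iff_of_nonneg (div_nonneg hr₁.le hr₂.le) two_ne_zero,
      div_eq_one_iff_eq hr₂.ne'] at hsq
  refine ⟨hr, ?_⟩
  rw [hr] at hlim₁
  have hc := tendsto_nhds_unique (hlim₁.congr' (heq.mono fun n hn => by rw [hn])) hlim₂
  simpa using hc

lemma eventually_tail_measurement_eq (h₁ : Admissible (N + 1) lam₁ r₁)
    (h₂ : Admissible (N + 1) lam₂ r₂)
    (heq : ∀ᶠ n in atTop, measurement (N + 1) lam₁ r₁ n = measurement (N + 1) lam₂ r₂ n) :
    ∀ᶠ n in atTop, measurement N (fun k => lam₁ (k + 1)) (fun k => r₁ (k + 1)) n =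
      measurement N (fun k => lam₂ (k + 1)) (fun k => r₂ (k + 1)) n := by
  obtain ⟨hr, hlam⟩ := first_layer_eq h₁ h₂ heq
  have hmem : 1 ∈ Icc 1 (N + 1) := ⟨le_rfl, by omega⟩
  have hsq : (2 * lam₂ 1) ^ 2 ≠ 1 := by
    have := h₂.one_lt_abs_two_mul_lam 1 hmem
    rw [← sq_abs]
    exact (one_lt_pow₀ this two_ne_zero).ne'
  filter_upwards [heq, h₁.eventually_isUnit_det, h₁.tail.eventually_isUnit_det,
    h₂.eventually_isUnit_det, h₂.tail.eventually_isUnit_det] with n hn hM₁ hM₁' hM₂ hM₂'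
  have hmap₁ := measurement_succ_div hM₁ hM₁' (h₁.radius_pos 1 hmem).ne'
  have hne₁ := measurement_tail_div_ne hM₁ hM₁'
  rw [hr, hlam] at hmap₁ hne₁
  rw [hn, measurement_succ_div hM₂ hM₂' (h₂.radius_pos 1 hmem).ne'] at hmap₁
  have hdiv := layerMap_injOn hsq hne₁ (measurement_tail_div_ne hM₂ hM₂') hmap₁.symm
  rwa [div_left_inj' (pow_ne_zero _ (h₂.radius_pos 1 hmem).ne')] at hdiv

lemma radii_eqOn (h₁ : Admissible N lam₁ r₁) (h₂ : Admissible N lam₂ r₂)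
    (heq : ∀ᶠ n in atTop, measurement N lam₁ r₁ n = measurement N lam₂ r₂ n) :
    EqOn r₁ r₂ (Icc 1 N) := by
  induction N generalizing lam₁ lam₂ r₁ r₂ with
  | zero => exact fun k hk => absurd (hk.1.trans hk.2) (by omega)
  | succ N ih =>
    have htail := ih h₁.tail h₂.tail (eventually_tail_measurement_eq h₁ h₂ heq)
    rintro (_ | _ | k) ⟨hk1, hkN⟩
    · omega
    · exact (first_layer_eq h₁ h₂ heq).1
    · exact htail ⟨by omega, by omega⟩

lemma of_conductivity {σ : ℕ → ℝ} (hσ0 : σ 0 = 1)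
    (hσpos : ∀ k, 1 ≤ k → k ≤ N → 0 < σ k) (hσne : ∀ k, 1 ≤ k → k ≤ N → σ k ≠ σ (k - 1))
    (hlam : ∀ k, 1 ≤ k → k ≤ N → lam k = (σ k + σ (k - 1)) / (2 * (σ k - σ (k - 1))))
    (hr : ∀ k, 1 ≤ k → k < N → r (k + 1) < r k) (hrN : 0 < r N) : Admissible N lam r := by
  have hanti : StrictAntiOn r (Icc 1 N) :=
    strictAntiOn_of_add_one_lt ordConnected_Icc fun k _ hk hk' => hr k hk.1 hk'.2
  refine ⟨fun k ⟨hk1, hkN⟩ => ?_, fun k hk => ?_, hanti⟩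
  · have hprev : 0 < σ (k - 1) := by
      rcases hk1.eq_or_lt with rfl | hk1
      · simp [hσ0]
      · exact hσpos _ (by omega) (by omega)
    rw [hlam k hk1 hkN]
    exact one_lt_abs_two_mul_contrast (hσpos k hk1 hkN) hprev (hσne k hk1 hkN)
  · exact hrN.trans_le (hanti.antitoneOn hk ⟨hk.1.trans hk.2, le_rfl⟩ hk.2)

end Admissible

theorem radii_uniqueness_general (N : ℕ)
    (σ₁ σ₂ lam₁ lam₂ r₁ r₂ : ℕ → ℝ)
    (hσ₁0 : σ₁ 0 = 1) (hσ₂0 : σ₂ 0 = 1)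
    (hσ₁pos : ∀ k, 1 ≤ k → k ≤ N → 0 < σ₁ k)
    (hσ₂pos : ∀ k, 1 ≤ k → k ≤ N → 0 < σ₂ k)
    (hσ₁ne : ∀ k, 1 ≤ k → k ≤ N → σ₁ k ≠ σ₁ (k - 1))
    (hσ₂ne : ∀ k, 1 ≤ k → k ≤ N → σ₂ k ≠ σ₂ (k - 1))
    (hlam₁ : ∀ k, 1 ≤ k → k ≤ N → lam₁ k = (σ₁ k + σ₁ (k - 1)) / (2 * (σ₁ k - σ₁ (k - 1))))
    (hlam₂ : ∀ k, 1 ≤ k → k ≤ N → lam₂ k = (σ₂ k + σ₂ (k - 1)) / (2 * (σ₂ k - σ₂ (k - 1))))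
    (hr₁ : ∀ k, 1 ≤ k → k < N → r₁ (k + 1) < r₁ k) (hr₁N : 0 < r₁ N)
    (hr₂ : ∀ k, 1 ≤ k → k < N → r₂ (k + 1) < r₂ k) (hr₂N : 0 < r₂ N)
    (h : ∃ n₀ : ℕ, 1 ≤ n₀ ∧ ∀ n : ℕ, n₀ ≤ n →
      (fun _ : Fin N => (1 : ℝ)) ⬝ᵥ
          ((Upsilon N r₁ n * (GPM N lam₁ r₁ n)⁻¹) *ᵥ fun _ : Fin N => (1 : ℝ)) =
        (fun _ : Fin N => (1 : ℝ)) ⬝ᵥ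
          ((Upsilon N r₂ n * (GPM N lam₂ r₂ n)⁻¹) *ᵥ fun _ : Fin N => (1 : ℝ))) :
    ∀ k, 1 ≤ k → k ≤ N → r₁ k = r₂ k := by
  obtain ⟨n₀, -, hn₀⟩ := h
  have heq : ∀ᶠ n in atTop, measurement N lam₁ r₁ n = measurement N lam₂ r₂ n :=
    eventually_atTop.2 ⟨n₀, hn₀⟩
  have h₁ := Admissible.of_conductivity hσ₁0 hσ₁pos hσ₁ne hlam₁ hr₁ hr₁N
  have h₂ := Admissible.of_conductivity hσ₂0 hσ₂pos hσ₂ne hlam₂ hr₂ hr₂N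
  exact fun k hk1 hkN => h₁.radii_eqOn h₂ heq ⟨hk1, hkN⟩

/-- Uniqueness of the interface radii of an `N`-layer concentric disk: if the mode-`n`
measurements `eᵀ Υ_N^{(n)} (M_N^{(n)})⁻¹ e` of two structures agree for all sufficiently
large `n`, then the radii coincide. -/
theorem radii_uniqueness (N : ℕ) (hN : 1 ≤ N)
    (σ₁ σ₂ lam₁ lam₂ r₁ r₂ : ℕ → ℝ)
    (hσ₁0 : σ₁ 0 = 1) (hσ₂0 : σ₂ 0 = 1)
    (hσ₁pos : ∀ k, 1 ≤ k → k ≤ N → 0 < σ₁ k)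
    (hσ₂pos : ∀ k, 1 ≤ k → k ≤ N → 0 < σ₂ k)
    (hσ₁ne : ∀ k, 1 ≤ k → k ≤ N → σ₁ k ≠ σ₁ (k - 1))
    (hσ₂ne : ∀ k, 1 ≤ k → k ≤ N → σ₂ k ≠ σ₂ (k - 1))
    (hlam₁ : ∀ k, 1 ≤ k → k ≤ N → lam₁ k = (σ₁ k + σ₁ (k - 1)) / (2 * (σ₁ k - σ₁ (k - 1))))
    (hlam₂ : ∀ k, 1 ≤ k → k ≤ N → lam₂ k = (σ₂ k + σ₂ (k - 1)) / (2 * (σ₂ k - σ₂ (k - 1))))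
    (hr₁ : ∀ k, 1 ≤ k → k < N → r₁ (k + 1) < r₁ k) (hr₁N : 0 < r₁ N)
    (hr₂ : ∀ k, 1 ≤ k → k < N → r₂ (k + 1) < r₂ k) (hr₂N : 0 < r₂ N)
    (hinv₁ : ∀ n : ℕ, 0 < n → IsUnit (GPM N lam₁ r₁ n).det)
    (hinv₂ : ∀ n : ℕ, 0 < n → IsUnit (GPM N lam₂ r₂ n).det)
    (h : ∃ n₀ : ℕ, 1 ≤ n₀ ∧ ∀ n : ℕ, n₀ ≤ n →
      (fun _ : Fin N => (1 : ℝ)) ⬝ᵥ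
          ((Upsilon N r₁ n * (GPM N lam₁ r₁ n)⁻¹) *ᵥ fun _ : Fin N => (1 : ℝ)) =
        (fun _ : Fin N => (1 : ℝ)) ⬝ᵥ
          ((Upsilon N r₂ n * (GPM N lam₂ r₂ n)⁻¹) *ᵥ fun _ : Fin N => (1 : ℝ))) :
    ∀ k, 1 ≤ k → k ≤ N → r₁ k = r₂ k :=
  radii_uniqueness_general N σ₁ σ₂ lam₁ lam₂ r₁ r₂ hσ₁0 hσ₂0 hσ₁pos hσ₂pos hσ₁ne hσ₂ne hlam₁ hlam₂
    hr₁ hr₁N hr₂ hr₂N h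
end

section
/- Let N ≥ 1 be an integer and r₁ > r₂ > ⋯ > r_N > 0. For j = 1, 2, let σ₀^{(j)} = 1 and σ₁^{(j)}, …, σ_N^{(j)} be positive real numbers with σ_k^{(j)} ≠ σ_{k−1}^{(j)} for each k, set λ_k^{(j)} := (σ_k^{(j)} + σ_{k−1}^{(j)})/(2(σ_k^{(j)} − σ_{k−1}^{(j)})), and let M_{N,j}^{(n)} be the generalized polarization matrix built from (λ^{(j)}, r); assume M_{N,j}^{(n)} is invertible for every positive integer n and j = 1, 2. Suppose there exist positive integers i₁ < i₂ < ⋯ < i_N such that the N×N matrix 𝕃_N whose k-th row is eᵀ Υ_N^{(i_k)} adj(M_{N,1}^{(i_k)}) and the N×N matrix ℝ_N whose k-th column is adj(M_{N,2}^{(i_k)}) e are both invertible. If eᵀ Υ_N^{(n)} (M_{N,1}^{(n)})^{−1} e = eᵀ Υ_N^{(n)} (M_{N,2}^{(n)})^{−1} e for every positive integer n, then σ_k^{(1)} = σ_k^{(2)} for every k = 1, …, N. -/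
open Matrix

open Filter Topology Finset

/-!
As `n → ∞`, the polarization matrix `M⁽ⁿ⁾` tends to a lower triangular matrix, and its conjugate
`Υ⁽ⁿ⁾ M⁽ⁿ⁾ (Υ⁽ⁿ⁾)⁻¹` to an upper triangular one, both with diagonal `-2λ`. Since
`M₂ - M₁ = diag (2 (λ₁ - λ₂))`, the difference of the two measurements is
`∑ᵢ xᵢ⁽ⁿ⁾ yᵢ⁽ⁿ⁾ rᵢ^{2n} 2 (λ₁ᵢ - λ₂ᵢ)` with `x⁽ⁿ⁾ = eᵀ (Υ M₁ Υ⁻¹)⁻¹` and `y⁽ⁿ⁾ = M₂⁻¹ e`.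
The limits of `x⁽ⁿ⁾` and `y⁽ⁿ⁾` solve triangular systems whose solutions obey a two-term
recurrence, so none of their entries vanishes. An exponential sum with distinct positive bases
and such coefficients vanishes for all large `n` only if its coefficients vanish, so `λ₁ = λ₂`,
and the conductivities are then recovered layer by layer from the contrasts `λ`.
-/

section LowerTriangularConst

variable {K : Type*} [Field K] {N : ℕ}

def lowerTriangularConst (a : Fin N → K) (t : K) : Matrix (Fin N) (Fin N) K :=
  Matrix.of fun i j => if i = j then a i else if j < i then t else 0

theorem det_lowerTriangularConst (a : Fin N → K) (t : K) :
    (lowerTriangularConst a t).det = ∏ i, a i := by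
  rw [Matrix.det_of_isLowerTriangular _ fun i j (hij : i < j) => ?_]
  · simp [lowerTriangularConst]
  · simp [lowerTriangularConst, hij.ne, hij.not_gt]

theorem lowerTriangularConst_mulVec_apply (a c : Fin N → K) (t : K) (i : Fin N) :
    (lowerTriangularConst a t *ᵥ c) i = a i * c i + t * ∑ j ∈ Iio i, c j := by
  have hfilter : ({j | ¬i = j} : Finset (Fin N)).filter (· < i) = Iio i := by
    ext j
    simp only [mem_filter, mem_univ, true_and, mem_Iio]
    exact ⟨And.right, fun h => ⟨h.ne', h⟩⟩
  simp [lowerTriangularConst, mulVec, dotProduct, ite_mul, sum_ite, mul_sum, Finset.filter_eq,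
    hfilter]

theorem ne_zero_of_mul_add_mul_sum_range_eq_one {a c : ℕ → K} {t : K}
    (hat : ∀ k < N, a k ≠ t) (hc : ∀ k < N, a k * c k + t * ∑ j ∈ range k, c j = 1) :
    ∀ k < N, c k ≠ 0 := by
  intro k
  induction k with
  | zero =>
    intro hN
    exact right_ne_zero_of_mul_eq_one (by simpa using hc 0 hN)
  | succ k ih =>
    intro hk
    -- consecutive equations differ by a two-term recurrence
    have hrec : a (k + 1) * c (k + 1) = (a k - t) * c k := by
      linear_combination hc (k + 1) hk - hc k (by omega) - t * sum_range_succ c k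
    intro hzero
    rw [hzero, mul_zero] at hrec
    exact mul_ne_zero (sub_ne_zero.2 (hat k (by omega))) (ih (by omega)) hrec.symm

theorem lowerTriangularConst_inv_mulVec_one_ne_zero {a : Fin N → K} {t : K}
    (ha : ∀ i, a i ≠ 0) (hat : ∀ i, a i ≠ t) (i : Fin N) :
    ((lowerTriangularConst a t)⁻¹ *ᵥ fun _ => 1) i ≠ 0 := by
  set c := (lowerTriangularConst a t)⁻¹ *ᵥ fun _ => (1 : K)
  have hdet : IsUnit (lowerTriangularConst a t).det := by
    rw [det_lowerTriangularConst, isUnit_iff_ne_zero]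
    exact prod_ne_zero_iff.2 fun i _ => ha i
  have hc : ∀ i, a i * c i + t * ∑ j ∈ Iio i, c j = 1 := fun i => by
    rw [← lowerTriangularConst_mulVec_apply, mulVec_mulVec, mul_nonsing_inv _ hdet, one_mulVec]
  let ext : (Fin N → K) → ℕ → K := fun f k => if h : k < N then f ⟨k, h⟩ else 0
  have hsum : ∀ i, ∑ j ∈ Iio i, c j = ∑ k ∈ range i, ext c k := fun i => by
    rw [← Nat.Iio_eq_range, ← Fin.map_valEmbedding_Iio, sum_map]
    simp [ext]
  simpa [ext] using ne_zero_of_mul_add_mul_sum_range_eq_one (a := ext a) (c := ext c) (t := t)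
    (fun k hk => by simpa [ext, hk] using hat ⟨k, hk⟩)
    (fun k hk => by simpa [ext, hk, hsum] using hc ⟨k, hk⟩) i i.2

end LowerTriangularConst

theorem Filter.Tendsto.matrix_inv {α ι K : Type*} [Fintype ι] [DecidableEq ι] [Field K]
    [TopologicalSpace K] [IsTopologicalRing K] [ContinuousInv₀ K] {l : Filter α}
    {M : α → Matrix ι ι K} {L : Matrix ι ι K} (hM : Tendsto M l (𝓝 L)) (hL : L.det ≠ 0) :
    Tendsto (fun x => (M x)⁻¹) l (𝓝 L⁻¹) := by
  have hinv : ContinuousAt Ring.inverse L.det := by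
    rw [Ring.inverse_eq_inv']
    exact continuousAt_inv₀ hL
  exact (continuousAt_matrix_inv L hinv).tendsto.comp hM

theorem eq_zero_of_eventually_sum_mul_pow_mul_eq_zero {ι : Type*} [Fintype ι] {ρ : ι → ℝ}
    (hρ : Function.Injective ρ) (hρ0 : ∀ i, 0 < ρ i) {u : ℕ → ι → ℝ} {v : ι → ℝ}
    (hu : Tendsto u atTop (𝓝 v)) (hv : ∀ i, v i ≠ 0) {d : ι → ℝ}
    (h : ∀ᶠ n in atTop, ∑ i, u n i * ρ i ^ n * d i = 0) : d = 0 := by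
  classical
  by_contra hd
  -- the dominant exponential among those with a nonzero coefficient
  obtain ⟨i, hi, hmax⟩ := (univ.filter fun j => d j ≠ 0).exists_max_image ρ <| by
    obtain ⟨j, hj⟩ := Function.ne_iff.1 hd
    exact ⟨j, by simpa using hj⟩
  simp only [mem_filter, mem_univ, true_and] at hi hmax
  have hterm : ∀ j, Tendsto (fun n => u n j * (ρ j / ρ i) ^ n * d j) atTop
      (𝓝 (if j = i then v i * d i else 0)) := by
    intro j
    by_cases hji : j = i
    · subst hji
      simpa [div_self (hρ0 j).ne'] using (tendsto_pi_nhds.1 hu j).mul_const (d j)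
    by_cases hdj : d j = 0
    · simp [hji, hdj]
    have hlt : ρ j / ρ i < 1 :=
      (div_lt_one (hρ0 i)).2 ((hmax j hdj).lt_of_ne (hρ.ne hji))
    simpa [hji] using ((tendsto_pi_nhds.1 hu j).mul
      (tendsto_pow_atTop_nhds_zero_of_lt_one (div_pos (hρ0 j) (hρ0 i)).le hlt)).mul_const (d j)
  have hlim := tendsto_finsetSum univ fun j _ => hterm j
  rw [Fintype.sum_ite_eq'] at hlim
  have hzero : ∀ᶠ n in atTop, ∑ j, u n j * (ρ j / ρ i) ^ n * d j = 0 := h.mono fun n hn => by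
    simp_rw [div_pow, mul_div_assoc', div_mul_eq_mul_div, ← sum_div, hn, zero_div]
  exact mul_ne_zero (hv i) hi
    (tendsto_nhds_unique hlim (tendsto_const_nhds.congr' (hzero.mono fun n hn => hn.symm)))

theorem tendsto_div_pow_two_mul_nhds_zero {a b : ℝ} (ha : 0 < a) (hab : a < b) :
    Tendsto (fun n : ℕ => (a / b) ^ (2 * n)) atTop (𝓝 0) := by
  simp_rw [pow_mul]
  exact tendsto_pow_atTop_nhds_zero_of_lt_one (sq_nonneg _)
    (pow_lt_one₀ (div_pos ha (ha.trans hab)).le ((div_lt_one (ha.trans hab)).2 hab) two_ne_zero)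

/-- `Υ_N^{(n)} M_N^{(n)} (Υ_N^{(n)})⁻¹`, written out entrywise. -/
noncomputable def conjGPM (N : ℕ) (lam r : ℕ → ℝ) (n : ℕ) : Matrix (Fin N) (Fin N) ℝ :=
  Matrix.of fun i j =>
    if i = j then -2 * lam ((i : ℕ) + 1)
    else if i < j then 1
    else -(r ((i : ℕ) + 1) / r ((j : ℕ) + 1)) ^ (2 * n)

section Polarization

variable {N : ℕ} {lam r : ℕ → ℝ}

theorem Upsilon_mul_GPM (hr0 : ∀ i : Fin N, r (i + 1) ≠ 0) (n : ℕ) :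
    Upsilon N r n * GPM N lam r n = conjGPM N lam r n * Upsilon N r n := by
  ext i j
  rw [Upsilon, diagonal_mul, mul_diagonal]
  rcases lt_trichotomy i j with hij | rfl | hij
  · simp only [GPM, conjGPM, of_apply, hij.ne, hij, if_false, if_true]
    rw [div_pow, mul_div_cancel₀ _ (pow_ne_zero _ (hr0 i)), one_mul]
  · simp [GPM, conjGPM, mul_comm]
  · simp only [GPM, conjGPM, of_apply, hij.ne', hij.not_gt, if_false]
    rw [div_pow, neg_mul, div_mul_cancel₀ _ (pow_ne_zero _ (hr0 j)), mul_neg_one]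

theorem det_conjGPM (hr0 : ∀ i : Fin N, r (i + 1) ≠ 0) (n : ℕ) :
    (conjGPM N lam r n).det = (GPM N lam r n).det := by
  have hΥ : (Upsilon N r n).det ≠ 0 := by
    rw [Upsilon, det_diagonal]
    exact prod_ne_zero_iff.2 fun i _ => pow_ne_zero _ (hr0 i)
  have h := congrArg Matrix.det (Upsilon_mul_GPM (lam := lam) hr0 n)
  rw [det_mul, det_mul, mul_comm] at h
  exact (mul_right_cancel₀ hΥ h).symm

theorem GPM_sub_GPM (lam₁ lam₂ r : ℕ → ℝ) (n : ℕ) :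
    GPM N lam₂ r n - GPM N lam₁ r n =
      diagonal fun i : Fin N => 2 * (lam₁ (i + 1) - lam₂ (i + 1)) := by
  ext i j
  by_cases hij : i = j
  · subst hij
    simp only [GPM, Matrix.sub_apply, of_apply, ↓reduceIte, diagonal_apply_eq]
    ring
  · simp [GPM, hij]

theorem tendsto_GPM (hr : StrictAnti fun i : Fin N => r (i + 1))
    (hr0 : ∀ i : Fin N, 0 < r (i + 1)) :
    Tendsto (GPM N lam r) atTop
      (𝓝 (lowerTriangularConst (fun i => -2 * lam (i + 1)) (-1))) := by
  refine tendsto_pi_nhds.2 fun i => tendsto_pi_nhds.2 fun j => ?_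
  rcases lt_trichotomy i j with hij | rfl | hij
  · simpa [GPM, lowerTriangularConst, hij.ne, hij, hij.not_gt]
      using tendsto_div_pow_two_mul_nhds_zero (hr0 j) (hr hij)
  · simp [GPM, lowerTriangularConst]
  · simp [GPM, lowerTriangularConst, hij.ne', hij.not_gt, hij]

theorem tendsto_conjGPM (hr : StrictAnti fun i : Fin N => r (i + 1))
    (hr0 : ∀ i : Fin N, 0 < r (i + 1)) :
    Tendsto (conjGPM N lam r) atTop
      (𝓝 (lowerTriangularConst (fun i => -2 * lam (i + 1)) 1)ᵀ) := by
  refine tendsto_pi_nhds.2 fun i => tendsto_pi_nhds.2 fun j => ?_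
  rcases lt_trichotomy i j with hij | rfl | hij
  · simp [conjGPM, lowerTriangularConst, hij.ne, hij, hij.ne']
  · simp [conjGPM, lowerTriangularConst]
  · simpa [conjGPM, lowerTriangularConst, hij.ne, hij.ne', hij.not_gt, hij]
      using (tendsto_div_pow_two_mul_nhds_zero (hr0 i) (hr hij)).neg

end Polarization

theorem measurement_sub_eq_sum {N n : ℕ} {lam₁ lam₂ r : ℕ → ℝ}
    (hr0 : ∀ i : Fin N, r (i + 1) ≠ 0) (hC : (conjGPM N lam₁ r n).det ≠ 0)
    (hB : (GPM N lam₂ r n).det ≠ 0) :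
    (fun _ => 1) ⬝ᵥ ((Upsilon N r n * (GPM N lam₁ r n)⁻¹) *ᵥ fun _ => 1) -
        (fun _ => 1) ⬝ᵥ ((Upsilon N r n * (GPM N lam₂ r n)⁻¹) *ᵥ fun _ => 1) =
      ∑ i : Fin N, ((fun _ => 1) ᵥ* (conjGPM N lam₁ r n)⁻¹) i *
        ((GPM N lam₂ r n)⁻¹ *ᵥ fun _ => 1) i * (r (i + 1) ^ 2) ^ n *
          (2 * (lam₁ (i + 1) - lam₂ (i + 1))) := by
  have hCu : IsUnit (conjGPM N lam₁ r n).det := isUnit_iff_ne_zero.2 hC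
  have hAu : IsUnit (GPM N lam₁ r n).det := by rwa [← det_conjGPM hr0]
  have hBu : IsUnit (GPM N lam₂ r n).det := isUnit_iff_ne_zero.2 hB
  have hΥ : Upsilon N r n * (GPM N lam₁ r n)⁻¹ = (conjGPM N lam₁ r n)⁻¹ * Upsilon N r n := by
    rw [← nonsing_inv_mul_cancel_left _ (Upsilon N r n * (GPM N lam₁ r n)⁻¹) hCu,
      ← Matrix.mul_assoc _ (Upsilon N r n), ← Upsilon_mul_GPM hr0,
      mul_nonsing_inv_cancel_right _ _ hAu]
  have hinv : (GPM N lam₁ r n)⁻¹ - (GPM N lam₂ r n)⁻¹ =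
      (GPM N lam₁ r n)⁻¹ * diagonal (fun i : Fin N => 2 * (lam₁ (i + 1) - lam₂ (i + 1))) *
        (GPM N lam₂ r n)⁻¹ := by
    rw [inv_sub_inv (by simp only [isUnit_iff_isUnit_det, hAu, hBu]), GPM_sub_GPM]
  rw [← dotProduct_sub, ← sub_mulVec, ← Matrix.mul_sub, hinv, ← Matrix.mul_assoc,
    ← Matrix.mul_assoc, hΥ, Upsilon, Matrix.mul_assoc (conjGPM N lam₁ r n)⁻¹,
    diagonal_mul_diagonal, ← mulVec_mulVec, ← mulVec_mulVec, dotProduct_mulVec, dotProduct]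
  refine sum_congr rfl fun i _ => ?_
  rw [mulVec_diagonal, pow_mul]
  ring

theorem lam_eq_of_measurement_eq {N : ℕ} {lam₁ lam₂ r : ℕ → ℝ}
    (hr : StrictAnti fun i : Fin N => r (i + 1)) (hr0 : ∀ i : Fin N, 0 < r (i + 1))
    (hlam₁ : ∀ i : Fin N, -2 * lam₁ (i + 1) ≠ 0 ∧ -2 * lam₁ (i + 1) ≠ 1)
    (hlam₂ : ∀ i : Fin N, -2 * lam₂ (i + 1) ≠ 0 ∧ -2 * lam₂ (i + 1) ≠ -1)
    (h : ∀ n : ℕ, 0 < n →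
      (fun _ : Fin N => (1 : ℝ)) ⬝ᵥ ((Upsilon N r n * (GPM N lam₁ r n)⁻¹) *ᵥ fun _ => 1) =
        (fun _ => 1) ⬝ᵥ ((Upsilon N r n * (GPM N lam₂ r n)⁻¹) *ᵥ fun _ => 1)) :
    ∀ i : Fin N, lam₁ (i + 1) = lam₂ (i + 1) := by
  set L₁ := lowerTriangularConst (fun i : Fin N => -2 * lam₁ (i + 1)) 1
  set L₂ := lowerTriangularConst (fun i : Fin N => -2 * lam₂ (i + 1)) (-1)
  have hL₁ : L₁ᵀ.det ≠ 0 := by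
    rw [det_transpose, det_lowerTriangularConst]
    exact prod_ne_zero_iff.2 fun i _ => (hlam₁ i).1
  have hL₂ : L₂.det ≠ 0 := by
    rw [det_lowerTriangularConst]
    exact prod_ne_zero_iff.2 fun i _ => (hlam₂ i).1
  have hC := tendsto_conjGPM (lam := lam₁) hr hr0
  have hB := tendsto_GPM (lam := lam₂) hr hr0
  have hx : Tendsto (fun n => (fun _ => 1) ᵥ* (conjGPM N lam₁ r n)⁻¹) atTop
      (𝓝 (L₁⁻¹ *ᵥ fun _ => 1)) := by
    rw [← vecMul_transpose, transpose_nonsing_inv]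
    exact ((continuous_const.matrix_vecMul continuous_id).tendsto _).comp (hC.matrix_inv hL₁)
  have hy : Tendsto (fun n => (GPM N lam₂ r n)⁻¹ *ᵥ fun _ => 1) atTop
      (𝓝 (L₂⁻¹ *ᵥ fun _ => 1)) :=
    ((continuous_id.matrix_mulVec continuous_const).tendsto _).comp (hB.matrix_inv hL₂)
  have hd := eq_zero_of_eventually_sum_mul_pow_mul_eq_zero
    (ρ := fun i : Fin N => r (i + 1) ^ 2)
    (fun i j hij => hr.injective ((pow_left_inj₀ (hr0 i).le (hr0 j).le two_ne_zero).1 hij))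
    (fun i => pow_pos (hr0 i) 2) (hx.mul hy)
    (fun i => mul_ne_zero
      (lowerTriangularConst_inv_mulVec_one_ne_zero (fun i => (hlam₁ i).1) (fun i => (hlam₁ i).2) i)
      (lowerTriangularConst_inv_mulVec_one_ne_zero (fun i => (hlam₂ i).1) (fun i => (hlam₂ i).2) i))
    (d := fun i => 2 * (lam₁ (i + 1) - lam₂ (i + 1))) <| by
      filter_upwards [eventually_gt_atTop 0,
        ((continuous_id.matrix_det.tendsto _).comp hC).eventually_ne hL₁,
        ((continuous_id.matrix_det.tendsto _).comp hB).eventually_ne hL₂] with n hn hCn hBn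
      simp only [Pi.mul_apply]
      rw [← measurement_sub_eq_sum (fun i => (hr0 i).ne') hCn hBn, h n hn, sub_self]
  intro i
  simpa [sub_eq_zero] using congrFun hd i

/-- `λ_k = contrast σ_k σ_{k-1}`. -/
noncomputable def contrast (s p : ℝ) : ℝ := (s + p) / (2 * (s - p))

theorem neg_two_mul_contrast_ne {s p : ℝ} (hs : 0 < s) (hp : 0 < p) (hsp : s ≠ p) :
    -2 * contrast s p ≠ 0 ∧ -2 * contrast s p ≠ 1 ∧ -2 * contrast s p ≠ -1 := by
  have hps : p - s ≠ 0 := sub_ne_zero.2 hsp.symm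
  have h : -2 * contrast s p = (s + p) / (p - s) := by
    rw [contrast, mul_div_assoc', div_eq_div_iff (by simpa [sub_eq_zero] using hsp) hps]
    ring
  rw [h, Ne, div_eq_iff hps, Ne, div_eq_iff hps, Ne, div_eq_iff hps]
  refine ⟨?_, ?_, ?_⟩ <;> intro heq <;> linarith

theorem contrast_injOn {p : ℝ} (hp : p ≠ 0) : Set.InjOn (contrast · p) {s | s ≠ p} := by
  intro s₁ h₁ s₂ h₂ h
  have h₁' : 2 * (s₁ - p) ≠ 0 := mul_ne_zero two_ne_zero (sub_ne_zero.2 h₁)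
  have h₂' : 2 * (s₂ - p) ≠ 0 := mul_ne_zero two_ne_zero (sub_ne_zero.2 h₂)
  have key : 4 * p * (s₁ - s₂) = 0 := by
    simp only [contrast] at h
    rw [div_eq_div_iff h₁' h₂'] at h
    linear_combination -h
  simpa [hp, sub_eq_zero] using key

theorem eq_of_contrast_eq {N : ℕ} {σ₁ σ₂ : ℕ → ℝ} (h0 : σ₁ 0 = σ₂ 0) (hσ : ∀ k < N, σ₁ k ≠ 0)
    (hne₁ : ∀ k, 1 ≤ k → k ≤ N → σ₁ k ≠ σ₁ (k - 1))
    (hne₂ : ∀ k, 1 ≤ k → k ≤ N → σ₂ k ≠ σ₂ (k - 1))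
    (h : ∀ k, 1 ≤ k → k ≤ N → contrast (σ₁ k) (σ₁ (k - 1)) = contrast (σ₂ k) (σ₂ (k - 1))) :
    ∀ k ≤ N, σ₁ k = σ₂ k := by
  intro k
  induction k with
  | zero => exact fun _ => h0
  | succ k ih =>
    intro hk
    have hne := hne₂ (k + 1) (by omega) hk
    have hcontrast := h (k + 1) (by omega) hk
    simp only [Nat.add_sub_cancel, ← ih (by omega)] at hne hcontrast
    exact contrast_injOn (hσ k hk) (by simpa using hne₁ (k + 1) (by omega) hk) hne hcontrast

theorem neg_two_mul_ne_of_eq_contrast {N : ℕ} {σ lam : ℕ → ℝ} (hσ0 : σ 0 = 1)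
    (hσpos : ∀ k, 1 ≤ k → k ≤ N → 0 < σ k) (hσne : ∀ k, 1 ≤ k → k ≤ N → σ k ≠ σ (k - 1))
    (hlam : ∀ k, 1 ≤ k → k ≤ N → lam k = contrast (σ k) (σ (k - 1))) (i : Fin N) :
    -2 * lam (i + 1) ≠ 0 ∧ -2 * lam (i + 1) ≠ 1 ∧ -2 * lam (i + 1) ≠ -1 := by
  have hi : (i : ℕ) + 1 ≤ N := i.2
  have hprev : 0 < σ i := (i : ℕ).eq_zero_or_pos.elim (fun h => by simp [h, hσ0])
    fun h => hσpos i h (by omega)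
  have hne : σ (i + 1) ≠ σ i := by simpa using hσne _ (by omega) hi
  rw [hlam _ (by omega) hi]
  simpa using neg_two_mul_contrast_ne (hσpos _ (by omega) hi) hprev hne

theorem lt_of_forall_succ_lt {N : ℕ} {r : ℕ → ℝ} (hr : ∀ k, 1 ≤ k → k < N → r (k + 1) < r k)
    {j k : ℕ} (hj : 1 ≤ j) (hjk : j < k) (hk : k ≤ N) : r k < r j := by
  induction k, hjk using Nat.le_induction with
  | base => exact hr j hj (by omega)
  | succ k hjk ih => exact (hr k (by omega) (by omega)).trans (ih (by omega))

theorem conductivity_uniqueness_general (N : ℕ) (r : ℕ → ℝ)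
    (hr : ∀ k, 1 ≤ k → k < N → r (k + 1) < r k) (hrN : 0 < r N)
    (σ₁ σ₂ lam₁ lam₂ : ℕ → ℝ)
    (hσ₁0 : σ₁ 0 = 1) (hσ₂0 : σ₂ 0 = 1)
    (hσ₁pos : ∀ k, 1 ≤ k → k ≤ N → 0 < σ₁ k)
    (hσ₂pos : ∀ k, 1 ≤ k → k ≤ N → 0 < σ₂ k)
    (hσ₁ne : ∀ k, 1 ≤ k → k ≤ N → σ₁ k ≠ σ₁ (k - 1))
    (hσ₂ne : ∀ k, 1 ≤ k → k ≤ N → σ₂ k ≠ σ₂ (k - 1))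
    (hlam₁ : ∀ k, 1 ≤ k → k ≤ N → lam₁ k = (σ₁ k + σ₁ (k - 1)) / (2 * (σ₁ k - σ₁ (k - 1))))
    (hlam₂ : ∀ k, 1 ≤ k → k ≤ N → lam₂ k = (σ₂ k + σ₂ (k - 1)) / (2 * (σ₂ k - σ₂ (k - 1))))
    (h : ∀ n : ℕ, 0 < n →
      (fun _ : Fin N => (1 : ℝ)) ⬝ᵥ
          ((Upsilon N r n * (GPM N lam₁ r n)⁻¹) *ᵥ fun _ : Fin N => (1 : ℝ)) =
        (fun _ : Fin N => (1 : ℝ)) ⬝ᵥ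
          ((Upsilon N r n * (GPM N lam₂ r n)⁻¹) *ᵥ fun _ : Fin N => (1 : ℝ))) :
    ∀ k, 1 ≤ k → k ≤ N → σ₁ k = σ₂ k := by
  have hanti : StrictAnti fun i : Fin N => r (i + 1) := fun i j hij =>
    lt_of_forall_succ_lt hr (by omega) (by simpa using hij) (by omega)
  have hpos : ∀ i : Fin N, 0 < r (i + 1) := fun i => by
    rcases (show (i : ℕ) + 1 ≤ N by omega).eq_or_lt with hi | hi
    · rwa [hi]
    · exact hrN.trans (lt_of_forall_succ_lt hr (by omega) hi le_rfl)
  have hdiag₁ := neg_two_mul_ne_of_eq_contrast hσ₁0 hσ₁pos hσ₁ne hlam₁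
  have hdiag₂ := neg_two_mul_ne_of_eq_contrast hσ₂0 hσ₂pos hσ₂ne hlam₂
  have hlam := lam_eq_of_measurement_eq hanti hpos (fun i => ⟨(hdiag₁ i).1, (hdiag₁ i).2.1⟩)
    (fun i => ⟨(hdiag₂ i).1, (hdiag₂ i).2.2⟩) h
  have hσ : ∀ k ≤ N, σ₁ k = σ₂ k := eq_of_contrast_eq (hσ₁0.trans hσ₂0.symm)
    (fun k hk => k.eq_zero_or_pos.elim (fun h => by simp [h, hσ₁0])
      fun h => (hσ₁pos k h hk.le).ne')
    hσ₁ne hσ₂ne fun k hk hkN => by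
      have hk' : lam₁ k = lam₂ k := by simpa [Nat.sub_add_cancel hk] using hlam ⟨k - 1, by omega⟩
      exact (hlam₁ k hk hkN).symm.trans (hk'.trans (hlam₂ k hk hkN))
  exact fun k _ hkN => hσ k hkN

/-- Uniqueness of the conductivity values of an `N`-layer concentric disk with known
radii: if for some index combination `i₁ < ⋯ < i_N` the matrices `𝕃_N` and `ℝ_N` are
invertible and the measurements `eᵀ Υ_N^{(n)} (M_{N,j}^{(n)})⁻¹ e` agree for all `n`, then
the conductivities coincide. -/
theorem conductivity_uniqueness (N : ℕ) (hN : 1 ≤ N) (r : ℕ → ℝ)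
    (hr : ∀ k, 1 ≤ k → k < N → r (k + 1) < r k) (hrN : 0 < r N)
    (σ₁ σ₂ lam₁ lam₂ : ℕ → ℝ)
    (hσ₁0 : σ₁ 0 = 1) (hσ₂0 : σ₂ 0 = 1)
    (hσ₁pos : ∀ k, 1 ≤ k → k ≤ N → 0 < σ₁ k)
    (hσ₂pos : ∀ k, 1 ≤ k → k ≤ N → 0 < σ₂ k)
    (hσ₁ne : ∀ k, 1 ≤ k → k ≤ N → σ₁ k ≠ σ₁ (k - 1))
    (hσ₂ne : ∀ k, 1 ≤ k → k ≤ N → σ₂ k ≠ σ₂ (k - 1))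
    (hlam₁ : ∀ k, 1 ≤ k → k ≤ N → lam₁ k = (σ₁ k + σ₁ (k - 1)) / (2 * (σ₁ k - σ₁ (k - 1))))
    (hlam₂ : ∀ k, 1 ≤ k → k ≤ N → lam₂ k = (σ₂ k + σ₂ (k - 1)) / (2 * (σ₂ k - σ₂ (k - 1))))
    (hinv₁ : ∀ n : ℕ, 0 < n → IsUnit (GPM N lam₁ r n).det)
    (hinv₂ : ∀ n : ℕ, 0 < n → IsUnit (GPM N lam₂ r n).det)
    (hLR : ∃ idx : Fin N → ℕ, StrictMono idx ∧ (∀ k, 1 ≤ idx k) ∧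
      IsUnit (Matrix.of fun k l : Fin N =>
        ((fun _ : Fin N => (1 : ℝ)) ᵥ*
          (Upsilon N r (idx k) * (GPM N lam₁ r (idx k)).adjugate)) l).det ∧
      IsUnit (Matrix.of fun l k : Fin N =>
        ((GPM N lam₂ r (idx k)).adjugate *ᵥ fun _ : Fin N => (1 : ℝ)) l).det)
    (h : ∀ n : ℕ, 0 < n →
      (fun _ : Fin N => (1 : ℝ)) ⬝ᵥ
          ((Upsilon N r n * (GPM N lam₁ r n)⁻¹) *ᵥ fun _ : Fin N => (1 : ℝ)) =
        (fun _ : Fin N => (1 : ℝ)) ⬝ᵥ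
          ((Upsilon N r n * (GPM N lam₂ r n)⁻¹) *ᵥ fun _ : Fin N => (1 : ℝ))) :
    ∀ k, 1 ≤ k → k ≤ N → σ₁ k = σ₂ k :=
  conductivity_uniqueness_general N r hr hrN σ₁ σ₂ lam₁ lam₂ hσ₁0 hσ₂0 hσ₁pos hσ₂pos hσ₁ne hσ₂ne
    hlam₁ hlam₂ h
end

section
/- Let λ₁, λ₂ be real numbers with |λ₁| > 1/2 and |λ₂| > 1/2, and let r₁ > r₂ > 0. For n = 1, 2 let M₂^{(n)} be the 2×2 matrix with rows (−2λ₁, (r₂/r₁)^{2n}) and (−1, −2λ₂), and Υ₂^{(n)} = diag(r₁^{2n}, r₂^{2n}). Then the 2×2 matrix 𝕃₂ whose n-th row is eᵀ Υ₂^{(n)} adj(M₂^{(n)}) (n = 1, 2) and the 2×2 matrix ℝ₂ whose n-th column is adj(M₂^{(n)}) e (n = 1, 2) are both invertible, where adj denotes the adjugate matrix and e = (1,1)ᵀ. -/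
open Matrix

/-- For a two-layer concentric disk with `|λ₁| > 1/2`, `|λ₂| > 1/2` and `r₁ > r₂ > 0`,
the matrices `𝕃₂` (with rows `eᵀ Υ₂^{(n)} adj(M₂^{(n)})`, `n = 1, 2`) and `ℝ₂` (with
columns `adj(M₂^{(n)}) e`, `n = 1, 2`) are both invertible. -/
theorem twoLayer_L_R_invertible (lam₁ lam₂ : ℝ)
    (hlam₁ : 1 / 2 < |lam₁|) (hlam₂ : 1 / 2 < |lam₂|)
    (r₁ r₂ : ℝ) (hr : r₂ < r₁) (hr₂ : 0 < r₂)
    (M : ℕ → Matrix (Fin 2) (Fin 2) ℝ)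
    (hM : ∀ n : ℕ, M n = !![-2 * lam₁, (r₂ / r₁) ^ (2 * n); -1, -2 * lam₂])
    (Υ : ℕ → Matrix (Fin 2) (Fin 2) ℝ)
    (hΥ : ∀ n : ℕ, Υ n = Matrix.diagonal ![r₁ ^ (2 * n), r₂ ^ (2 * n)]) :
    IsUnit (Matrix.of fun n l : Fin 2 =>
        ((fun _ : Fin 2 => (1 : ℝ)) ᵥ* (Υ ((n : ℕ) + 1) * (M ((n : ℕ) + 1)).adjugate)) l).det ∧
      IsUnit (Matrix.of fun l n : Fin 2 =>
        ((M ((n : ℕ) + 1)).adjugate *ᵥ fun _ : Fin 2 => (1 : ℝ)) l).det := by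
  have hr₁ : (0:ℝ) < r₁ := hr₂.trans hr
  have hr₁' : r₁ ≠ 0 := ne_of_gt hr₁
  have hr₂' : r₂ ≠ 0 := ne_of_gt hr₂
  have hlam₂0 : lam₂ ≠ 0 := by
    intro h; rw [h] at hlam₂; norm_num at hlam₂
  have h1p : 1 + 2 * lam₁ ≠ 0 := by
    intro h
    have : lam₁ = -(1/2) := by linarith
    rw [this, abs_neg, abs_of_pos (by norm_num : (0:ℝ) < 1/2)] at hlam₁; linarith
  have h1m : 1 - 2 * lam₁ ≠ 0 := by
    intro h
    have : lam₁ = 1/2 := by linarith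
    rw [this, abs_of_pos (by norm_num : (0:ℝ) < 1/2)] at hlam₁; linarith
  have hρ : (r₂ / r₁) ^ 2 - 1 ≠ 0 := by
    have : r₂ / r₁ < 1 := (div_lt_one hr₁).mpr hr
    have h0 : 0 < r₂ / r₁ := div_pos hr₂ hr₁
    nlinarith
  constructor <;> rw [isUnit_iff_ne_zero]
  · have hL : (Matrix.of fun n l : Fin 2 =>
        ((fun _ : Fin 2 => (1 : ℝ)) ᵥ* (Υ ((n : ℕ) + 1) * (M ((n : ℕ) + 1)).adjugate)) l).det
        = 2 * lam₂ * (1 + 2 * lam₁) * (r₁ ^ 2 * r₂ ^ 2 * (r₂ ^ 2 - r₁ ^ 2)) := by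
      simp only [hM, hΥ, Matrix.det_fin_two, Matrix.of_apply, Matrix.adjugate_fin_two,
        Matrix.vecMul, Matrix.mul_apply, dotProduct, Fin.sum_univ_two,
        Matrix.diagonal_apply, Matrix.cons_val', Matrix.cons_val_zero, Matrix.cons_val_one,
        Matrix.head_cons, Matrix.head_fin_const, Matrix.empty_val', Matrix.cons_val_fin_one,
        Fin.isValue, Fin.val_zero, Fin.val_one]
      norm_num
      field_simp
      ring
    rw [hL]
    exact mul_ne_zero (mul_ne_zero (mul_ne_zero two_ne_zero hlam₂0) h1p)
      (mul_ne_zero (mul_ne_zero (pow_ne_zero 2 hr₁') (pow_ne_zero 2 hr₂'))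
        (by nlinarith))
  · have hR : (Matrix.of fun l n : Fin 2 =>
        ((M ((n : ℕ) + 1)).adjugate *ᵥ fun _ : Fin 2 => (1 : ℝ)) l).det
        = (1 - 2 * lam₁) * (r₂ / r₁) ^ 2 * ((r₂ / r₁) ^ 2 - 1) := by
      simp only [hM, Matrix.det_fin_two, Matrix.of_apply, Matrix.adjugate_fin_two,
        Matrix.mulVec, dotProduct, Fin.sum_univ_two,
        Matrix.cons_val', Matrix.cons_val_zero, Matrix.cons_val_one,
        Matrix.head_cons, Matrix.empty_val', Matrix.cons_val_fin_one,
        Fin.isValue, Fin.val_zero, Fin.val_one]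
      norm_num
      ring
    rw [hR]
    exact mul_ne_zero (mul_ne_zero h1m (pow_ne_zero 2 (div_ne_zero hr₂' hr₁'))) hρ
end

section
/- Let r₀ > 0, let n ≥ 1 be an integer, and let z ∈ ℂ with |z| < r₀. Then (r₀/(2π)) · ∫_0^{2π} log|z − r₀ e^{it}| · e^{int} dt = −(r₀^{1−n}/(2n)) · z^n. -/
/-!
With `w = z / r₀`, factor `z - r₀ e^{it} = -r₀ e^{it} (1 - w e^{-it})`, so that
`log |z - r₀ e^{it}| = log r₀ + Re log (1 - w e^{-it})`. The constant `log r₀` has vanishing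
`n`-th Fourier coefficient. Since `|w e^{-it}| < 1`, the series `log (1 - ζ) = -∑ ζᵏ / k` may be
integrated termwise (dominated by `∑ |w|ᵏ`), so `log (1 - w e^{-it})` has Fourier coefficients
`-2π wⁿ / n` at frequency `n ≥ 1` and none at negative frequencies. Writing `Re = (· + conj ·) / 2`
gives `∫ log |1 - w e^{-it}| e^{int} dt = -π wⁿ / n`.
-/

open Real Complex MeasureTheory intervalIntegral ComplexConjugate

lemma integral_exp_int_mul_mul_I (m : ℤ) :
    ∫ t in (0 : ℝ)..2 * π, exp (m * t * I) = if m = 0 then (2 * π : ℂ) else 0 := by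
  split_ifs with hm
  · simp [hm]
  · have hmI : (m * I : ℂ) ≠ 0 := by simp [hm, I_ne_zero]
    simp_rw [mul_right_comm _ _ I]
    rw [integral_exp_mul_complex hmI, ofReal_zero, mul_zero, Complex.exp_zero,
      show (m * I * ↑(2 * π) : ℂ) = m * (2 * π * I) by push_cast; ring, exp_int_mul_two_pi_mul_I,
      sub_self, zero_div]

lemma norm_mul_exp_neg_mul_I (w : ℂ) (t : ℝ) : ‖w * exp (-(t * I))‖ = ‖w‖ := by
  simp [norm_exp]

lemma continuous_log_one_sub_mul_exp {w : ℂ} (hw : ‖w‖ < 1) :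
    Continuous fun t : ℝ => log (1 - w * exp (-(t * I))) := by
  refine Continuous.clog (by fun_prop) fun t => ?_
  simpa [sub_eq_add_neg] using mem_slitPlane_of_norm_lt_one (z := -(w * exp (-(t * I))))
    (by rwa [norm_neg, norm_mul_exp_neg_mul_I])

lemma hasSum_log_one_sub_mul_exp {w : ℂ} (hw : ‖w‖ < 1) (m : ℤ) (t : ℝ) :
    HasSum (fun k : ℕ => -(w ^ k / k) * exp ((m - k : ℤ) * t * I))
      (log (1 - w * exp (-(t * I))) * exp (m * t * I)) := by
  have h := ((hasSum_taylorSeries_neg_log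
    ((norm_mul_exp_neg_mul_I w t).trans_lt hw)).neg.mul_right (exp (m * t * I)))
  rw [neg_neg] at h
  refine h.congr_fun fun k => ?_
  rw [mul_pow, ← Complex.exp_nat_mul, show ((m - k : ℤ) : ℂ) * t * I = k * -(t * I) + m * t * I by
    push_cast; ring, Complex.exp_add]
  ring

lemma norm_pow_div_natCast_le {𝕜 : Type*} [RCLike 𝕜] (w : 𝕜) (k : ℕ) :
    ‖w ^ k / k‖ ≤ ‖w‖ ^ k := by
  rcases k.eq_zero_or_pos with rfl | hk
  · simp
  · rw [norm_div, norm_pow, RCLike.norm_natCast]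
    exact div_le_self (by positivity) (by exact_mod_cast hk)

lemma hasSum_integral_log_one_sub_mul_exp {w : ℂ} (hw : ‖w‖ < 1) (m : ℤ) :
    HasSum (fun k : ℕ => if (k : ℤ) = m then -(2 * π * w ^ k / k) else 0)
      (∫ t in (0 : ℝ)..2 * π, log (1 - w * exp (-(t * I))) * exp (m * t * I)) := by
  have h := hasSum_integral_of_dominated_convergence (μ := volume) (a := 0) (b := 2 * π)
    (fun k _ => ‖w‖ ^ k) (fun k => (Continuous.aestronglyMeasurable (by fun_prop)))
    (fun k => .of_forall fun t _ => by simpa [norm_exp] using norm_pow_div_natCast_le w k)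
    (.of_forall fun _ _ => summable_geometric_of_lt_one (norm_nonneg w) hw)
    intervalIntegrable_const (.of_forall fun t _ => hasSum_log_one_sub_mul_exp hw m t)
  refine h.congr_fun fun k => ?_
  rw [intervalIntegral.integral_const_mul, integral_exp_int_mul_mul_I]
  split_ifs <;> first | omega | ring

lemma integral_log_norm_one_sub_mul_exp {w : ℂ} (hw : ‖w‖ < 1) {n : ℕ} (hn : n ≠ 0) :
    ∫ t in (0 : ℝ)..2 * π, (Real.log ‖1 - w * exp (-(t * I))‖ : ℂ) * exp (n * t * I) =
      -(π * w ^ n / n) := by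
  set F := fun t : ℝ => log (1 - w * exp (-(t * I)))
  have hF : Continuous F := continuous_log_one_sub_mul_exp hw
  have h_pos : ∫ t in (0 : ℝ)..2 * π, F t * exp (n * t * I) = -(2 * π * w ^ n / n) := by
    refine (hasSum_integral_log_one_sub_mul_exp hw n).unique ?_
    refine (hasSum_ite_eq n _).congr_fun fun k => ?_
    rcases eq_or_ne k n with rfl | hk <;> simp [*]
  have h_neg : ∫ t in (0 : ℝ)..2 * π, F t * exp ((-n : ℤ) * t * I) = 0 := by
    refine (hasSum_integral_log_one_sub_mul_exp hw (-n)).unique (hasSum_zero.congr_fun fun k => ?_)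
    rw [if_neg (by omega)]
  -- `log ‖x‖ = Re (log x)`, and the conjugate turns the frequency `n` into `-n`
  have h_re : ∀ t : ℝ, (Real.log ‖1 - w * exp (-(t * I))‖ : ℂ) * exp (n * t * I) =
      (F t * exp (n * t * I) + conj (F t * exp ((-n : ℤ) * t * I))) / 2 := fun t => by
    rw [← log_re, re_eq_add_conj, map_mul, ← exp_conj]
    simp only [Int.cast_neg, Int.cast_natCast, neg_mul, map_neg, map_mul, map_natCast, conj_ofReal,
      conj_I, mul_neg, neg_neg]
    ring
  simp_rw [h_re]
  rw [intervalIntegral.integral_div, intervalIntegral.integral_add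
    ((by fun_prop : Continuous _).intervalIntegrable _ _)
    ((by fun_prop : Continuous _).intervalIntegrable _ _), intervalIntegral_conj, h_pos, h_neg,
    map_zero, add_zero]
  ring

lemma log_norm_sub_mul_exp_mul_I {r : ℝ} (hr : 0 < r) {z : ℂ} (hz : ‖z‖ < r) (t : ℝ) :
    Real.log ‖z - r * exp (t * I)‖ = Real.log r + Real.log ‖1 - z / r * exp (-(t * I))‖ := by
  have hr' : (r : ℂ) ≠ 0 := ofReal_ne_zero.mpr hr.ne'
  have hfactor : z - r * exp (t * I) = -(r * exp (t * I)) * (1 - z / r * exp (-(t * I))) := by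
    have he : exp (t * I) * exp (-(t * I)) = 1 := by
      rw [← Complex.exp_add, add_neg_cancel, Complex.exp_zero]
    field_simp
    linear_combination (-z) * he
  have hw : ‖z / r * exp (-(t * I))‖ < 1 := by
    rwa [norm_mul_exp_neg_mul_I, norm_div, norm_real, norm_of_nonneg hr.le, div_lt_one hr]
  rw [hfactor, norm_mul, norm_neg, norm_mul, norm_exp_ofReal_mul_I, mul_one, norm_real,
    norm_of_nonneg hr.le, Real.log_mul hr.ne']
  rw [norm_ne_zero_iff, sub_ne_zero]
  exact fun h => (h ▸ hw).ne (by simp)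

/-- The single layer potential of the density `e^{inθ}` on the circle of radius `r₀`,
evaluated at an interior point `z`:
`(r₀/(2π)) ∫₀^{2π} log|z − r₀ e^{it}| e^{int} dt = −(r₀^{1−n}/(2n)) zⁿ`. -/
theorem singleLayer_circle_interior (r₀ : ℝ) (hr₀ : 0 < r₀) (n : ℕ) (hn : 1 ≤ n)
    (z : ℂ) (hz : ‖z‖ < r₀) :
    ((r₀ : ℂ) / (2 * Real.pi)) *
        ∫ t in (0 : ℝ)..(2 * Real.pi),
          (Real.log ‖z - (r₀ : ℂ) * Complex.exp ((t : ℂ) * Complex.I)‖ : ℂ) *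
            Complex.exp ((n : ℂ) * (t : ℂ) * Complex.I) =
      -((r₀ : ℂ) ^ ((1 : ℤ) - (n : ℤ)) / (2 * (n : ℂ))) * z ^ n := by
  have hn₀ : n ≠ 0 := by omega
  have hr₀' : (r₀ : ℂ) ≠ 0 := ofReal_ne_zero.mpr hr₀.ne'
  have hw : ‖z / r₀‖ < 1 := by
    rwa [norm_div, norm_real, norm_of_nonneg hr₀.le, div_lt_one hr₀]
  have hG : Continuous fun t : ℝ => (Real.log ‖1 - z / r₀ * exp (-(t * I))‖ : ℂ) := by
    simpa only [Function.comp_def, log_re] using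
      continuous_ofReal.comp (continuous_re.comp (continuous_log_one_sub_mul_exp hw))
  have h_const : ∫ t in (0 : ℝ)..2 * π, exp (n * t * I) = 0 := by
    simpa [hn₀] using integral_exp_int_mul_mul_I n
  simp_rw [log_norm_sub_mul_exp_mul_I hr₀ hz, ofReal_add, add_mul]
  rw [intervalIntegral.integral_add ((by fun_prop : Continuous _).intervalIntegrable _ _)
      ((by fun_prop : Continuous _).intervalIntegrable _ _), intervalIntegral.integral_const_mul,
    h_const, mul_zero, zero_add, integral_log_norm_one_sub_mul_exp hw hn₀,
    zpow_sub₀ hr₀', zpow_one, zpow_natCast, div_pow]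
  field_simp
end
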